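/- arXiv:2101.02902 — 6 statements merged into one kernel-verified Lean document; each statement's English description precedes it below -/
import Mathlib

section
/- For real numbers ℓ₁, ℓ₂ with ℓ₁ ≠ 0, the identity 4ℓ₁ℓ₂ ∫₀^∞ e^{-π ℓ₁² w₁²} (∫₀^{w₁} e^{-π ℓ₂² w₂²} dw₂) dw₁ = (2/π) arctan(ℓ₂/ℓ₁) holds. -/
open MeasureTheory Real

lemma aux_gauss {b : ℝ} (hb : 0 < b) :
    ∫ r in Set.Ioi (0:ℝ), r * Real.exp (-b * r ^ 2) = (2 * b)⁻¹ := by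
  have A : ∀ x : ℝ, HasDerivAt (fun x => -(2 * b)⁻¹ * Real.exp (-b * x ^ 2))
      (x * Real.exp (-b * x ^ 2)) x := by
    intro x
    convert ((hasDerivAt_pow 2 x).const_mul (-b)).exp.const_mul (-(2 * b)⁻¹) using 1
    · rfl
    · rfl
    field_simp
    ring
  have B : Filter.Tendsto (fun y : ℝ => -(2 * b)⁻¹ * Real.exp (-b * y ^ 2))
      Filter.atTop (nhds (-(2 * b)⁻¹ * 0)) := by
    refine Filter.Tendsto.const_mul _ ?_
    exact Real.tendsto_exp_atBot.comp
      ((Filter.tendsto_pow_atTop two_ne_zero).const_mul_atTop_of_neg (neg_lt_zero.2 hb))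
  have := integral_Ioi_of_hasDerivAt_of_tendsto' (a := 0)
    (fun x _ => A x) (integrable_mul_exp_neg_mul_sq hb).integrableOn B
  simpa using this

lemma key_lemma {a b : ℝ} (ha : 0 < a) (hb : 0 < b) :
    (∫ x in Set.Ioi (0:ℝ), Real.exp (-π * a ^ 2 * x ^ 2) *
        ∫ y in (0:ℝ)..x, Real.exp (-π * b ^ 2 * y ^ 2))
      = Real.arctan (b / a) / (2 * π * a * b) := by
  haveI : IsFiniteMeasure (volume.restrict (Set.Ioc (0:ℝ) 1)) :=
    ⟨by simp [Real.volume_Ioc]⟩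
  set f : ℝ → ℝ → ℝ := fun x t => x * Real.exp (-(π * (a^2 + b^2 * t^2)) * x^2) with hf
  have step1 : Set.EqOn
      (fun x => Real.exp (-π * a ^ 2 * x ^ 2) *
        ∫ y in (0:ℝ)..x, Real.exp (-π * b ^ 2 * y ^ 2))
      (fun x => ∫ t in Set.Ioc (0:ℝ) 1, f x t) (Set.Ioi 0) := by
    intro x hx
    have hx0 : x ≠ 0 := ne_of_gt hx
    have h1 : x * ∫ t in (0:ℝ)..1, Real.exp (-π * b^2 * (x*t)^2)
        = ∫ y in (0:ℝ)..x, Real.exp (-π * b^2 * y^2) := by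
      rw [intervalIntegral.integral_comp_mul_left (fun y => Real.exp (-π*b^2*y^2)) hx0]
      rw [mul_zero, mul_one, smul_eq_mul, ← mul_assoc, mul_inv_cancel₀ hx0, one_mul]
    have h2 : ∀ t : ℝ, Real.exp (-π*a^2*x^2) * (x * Real.exp (-π*b^2*(x*t)^2)) = f x t := by
      intro t
      simp only [hf]
      rw [mul_left_comm, ← Real.exp_add]
      congr 1
      ring
    simp only
    rw [← h1, ← intervalIntegral.integral_const_mul, ← intervalIntegral.integral_const_mul]
    rw [← intervalIntegral.integral_of_le zero_le_one]
    apply intervalIntegral.integral_congr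
    intro t _
    exact h2 t
  rw [MeasureTheory.setIntegral_congr_fun measurableSet_Ioi step1]
  have hint : Integrable (Function.uncurry f)
      ((volume.restrict (Set.Ioi (0:ℝ))).prod (volume.restrict (Set.Ioc (0:ℝ) 1))) := by
    have hc : Continuous (Function.uncurry f) := by
      simp only [Function.uncurry, hf]
      fun_prop
    have hg : Integrable (fun p : ℝ × ℝ => |p.1 * Real.exp (-(π * a^2) * p.1^2)| * 1)
        ((volume.restrict (Set.Ioi (0:ℝ))).prod (volume.restrict (Set.Ioc (0:ℝ) 1))) := by
      exact Integrable.mul_prod (L := ℝ)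
        (f := fun x => |x * Real.exp (-(π * a^2) * x^2)|) (g := fun _ => (1:ℝ))
        ((integrable_mul_exp_neg_mul_sq (by positivity : (0:ℝ) < π * a^2)).abs).restrict
        (integrable_const 1)
    refine hg.mono' hc.aestronglyMeasurable ?_
    refine Filter.Eventually.of_forall ?_
    rintro ⟨x, t⟩
    have hnorm : ‖Function.uncurry f (x, t)‖
        = |x| * Real.exp (-(π * (a^2 + b^2 * t^2)) * x^2) := by
      simp [Function.uncurry, hf, abs_mul, Real.abs_exp]
    rw [hnorm, mul_one, abs_mul, Real.abs_exp]
    refine mul_le_mul_of_nonneg_left ?_ (abs_nonneg x)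
    apply Real.exp_le_exp.mpr
    nlinarith [mul_nonneg Real.pi_pos.le (by positivity : (0:ℝ) ≤ b^2 * t^2 * x^2)]
  rw [MeasureTheory.integral_integral_swap hint]
  have step2 : Set.EqOn (fun t => ∫ x in Set.Ioi (0:ℝ), f x t)
      (fun t => (2 * (π * (a^2 + b^2 * t^2)))⁻¹) (Set.Ioc 0 1) := by
    intro t _
    simp only [hf]
    exact aux_gauss (by positivity)
  rw [MeasureTheory.setIntegral_congr_fun measurableSet_Ioc step2]
  rw [← intervalIntegral.integral_of_le zero_le_one]
  have h3 : ∀ t : ℝ, (2 * (π * (a^2 + b^2 * t^2)))⁻¹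
      = (2*π*a^2)⁻¹ * (1 + (b/a * t)^2)⁻¹ := by
    intro t
    rw [← mul_inv]
    congr 1
    field_simp
  simp_rw [h3]
  rw [intervalIntegral.integral_const_mul]
  rw [intervalIntegral.integral_comp_mul_left (fun s => (1+s^2)⁻¹)
    (ne_of_gt (div_pos hb ha))]
  rw [mul_zero, mul_one, smul_eq_mul, integral_inv_one_add_sq, Real.arctan_zero, sub_zero]
  have hπ := Real.pi_ne_zero
  field_simp

theorem arctan_double_integral (ℓ₁ ℓ₂ : ℝ) (h : ℓ₁ ≠ 0) :
    4 * ℓ₁ * ℓ₂ *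
      ∫ w₁ in Set.Ioi (0 : ℝ),
        Real.exp (-π * ℓ₁ ^ 2 * w₁ ^ 2) *
          ∫ w₂ in (0 : ℝ)..w₁, Real.exp (-π * ℓ₂ ^ 2 * w₂ ^ 2)
    = 2 / π * Real.arctan (ℓ₂ / ℓ₁) := by
  rcases eq_or_ne ℓ₂ 0 with hz | hz
  · simp [hz]
  have hπ := Real.pi_ne_zero
  have key := key_lemma (abs_pos.mpr h) (abs_pos.mpr hz)
  rw [sq_abs, sq_abs] at key
  rw [key]
  rcases h.lt_or_gt with h1 | h1 <;> rcases hz.lt_or_gt with h2 | h2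
  · rw [abs_of_neg h1, abs_of_neg h2, neg_div_neg_eq]
    field_simp
    ring
  · rw [abs_of_neg h1, abs_of_pos h2, div_neg, Real.arctan_neg,
      show ℓ₂ / ℓ₁ = -(ℓ₂ / -ℓ₁) by field_simp, Real.arctan_neg]
    field_simp
    ring
  · rw [abs_of_pos h1, abs_of_neg h2, neg_div, Real.arctan_neg]
    field_simp
    ring
  · rw [abs_of_pos h1, abs_of_pos h2]
    field_simp
    ring
end

section
/- Let ℓ₁, ℓ₂, κ be real numbers with ℓ₁ ≠ 0 and ℓ₂ + κℓ₁ ≠ 0. Set m₁ = (ℓ₂ + κℓ₁)/√(1+κ²) and m₂ = (ℓ₁ - κℓ₂)/√(1+κ²). Then (2/π)(arctan(ℓ₂/ℓ₁) + arctan(m₂/m₁) + arctan(κ)) = sgn(ℓ₁)·sgn(ℓ₂ + κℓ₁). -/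
/-! Put `a = ℓ₂ / ℓ₁` and `s = arctan a + arctan κ`. Since `√(1 + κ²)` cancels,
`m₂ / m₁ = (1 - a κ) / (a + κ) = (tan s)⁻¹ = tan (π / 2 - s)`. As `s ∈ (-π, π)` has the sign of
`a + κ`, shifting `π / 2 - s` by `π` when `s < 0` brings it into `(-π / 2, π / 2)`, so
`arctan (m₂ / m₁) = π / 2 · sgn (a + κ) - s`, and `sgn (a + κ) = sgn ℓ₁ · sgn (ℓ₂ + κ ℓ₁)`. -/

open Real

theorem Real.sign_mul (x y : ℝ) : sign (x * y) = sign x * sign y := by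
  rcases lt_trichotomy x 0 with hx | rfl | hx <;> rcases lt_trichotomy y 0 with hy | rfl | hy <;>
    simp [sign_of_pos, sign_of_neg, mul_pos_of_neg_of_neg, mul_neg_of_neg_of_pos,
      mul_neg_of_pos_of_neg, *]

theorem Real.sign_div (x y : ℝ) : sign (x / y) = sign x * sign y := by
  rw [div_eq_mul_inv, sign_mul, sign_inv]

theorem tan_arctan_add_arctan (a t : ℝ) :
    tan (arctan a + arctan t) = (a + t) / (1 - a * t) := by
  rw [tan_add' ⟨arctan_ne_mul_pi_div_two, arctan_ne_mul_pi_div_two⟩, tan_arctan, tan_arctan]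

theorem sign_arctan_add_arctan (a t : ℝ) : sign (arctan a + arctan t) = sign (a + t) := by
  have hpos : 0 < arctan a + arctan t ↔ 0 < a + t := by
    rw [← sub_neg_eq_add, ← sub_neg_eq_add a, sub_pos, sub_pos, ← arctan_neg,
      arctan_lt_arctan_iff]
  have hneg : arctan a + arctan t < 0 ↔ a + t < 0 := by
    rw [← sub_neg_eq_add, ← sub_neg_eq_add a, sub_neg, sub_neg, ← arctan_neg,
      arctan_lt_arctan_iff]
  simp only [Real.sign, hpos, hneg]

theorem arctan_inv_tan {s : ℝ} (hs : s ∈ Set.Ioo (-π) π) (hs₀ : s ≠ 0) :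
    arctan (tan s)⁻¹ = π / 2 * sign s - s := by
  obtain ⟨hlo, hhi⟩ := hs
  rw [← tan_pi_div_two_sub]
  rcases hs₀.lt_or_gt with hneg | hpos
  · rw [← tan_sub_pi, arctan_tan (by linarith) (by linarith), sign_of_neg hneg]
    ring
  · rw [arctan_tan (by linarith) (by linarith), sign_of_pos hpos]
    ring

theorem arctan_add_arctan_div_add_arctan {a t : ℝ} (h : a + t ≠ 0) :
    arctan a + arctan ((1 - a * t) / (a + t)) + arctan t = π / 2 * sign (a + t) := by
  have hsign := sign_arctan_add_arctan a t
  have hs₀ : arctan a + arctan t ≠ 0 := by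
    rw [ne_eq, ← sign_eq_zero_iff, hsign, sign_eq_zero_iff]
    exact h
  have hs : arctan a + arctan t ∈ Set.Ioo (-π) π := by
    obtain ⟨ha₁, ha₂⟩ := arctan_mem_Ioo a
    obtain ⟨ht₁, ht₂⟩ := arctan_mem_Ioo t
    constructor <;> linarith
  rw [← inv_div, ← tan_arctan_add_arctan, arctan_inv_tan hs hs₀, hsign]
  ring

theorem arctan_sum_eq_sign_product (ℓ₁ ℓ₂ κ : ℝ) (h₁ : ℓ₁ ≠ 0)
    (h₂ : ℓ₂ + κ * ℓ₁ ≠ 0)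
    (m₁ m₂ : ℝ) (hm₁ : m₁ = (ℓ₂ + κ * ℓ₁) / Real.sqrt (1 + κ ^ 2))
    (hm₂ : m₂ = (ℓ₁ - κ * ℓ₂) / Real.sqrt (1 + κ ^ 2)) :
    2 / π * (Real.arctan (ℓ₂ / ℓ₁) + Real.arctan (m₂ / m₁) + Real.arctan κ)
      = Real.sign ℓ₁ * Real.sign (ℓ₂ + κ * ℓ₁) := by
  have hsum : ℓ₂ / ℓ₁ + κ = (ℓ₂ + κ * ℓ₁) / ℓ₁ := by field_simp
  have hratio : m₂ / m₁ = (1 - ℓ₂ / ℓ₁ * κ) / (ℓ₂ / ℓ₁ + κ) := by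
    have : √(1 + κ ^ 2) ≠ 0 := by positivity
    rw [hm₁, hm₂, hsum]
    field_simp
  rw [hratio, arctan_add_arctan_div_add_arctan (hsum ▸ div_ne_zero h₂ h₁), hsum, sign_div,
    mul_comm (sign ℓ₁)]
  field_simp
end

section
/- Let a, b, c be integers with a > 0 and Δ := ac - b² > 0, and let α₂ be a rational number such that a divides b and (b/a)·α₂ ≡ 1/2 (mod 1). Then for every fixed n₂ ∈ ℤ + α₂ and every τ in the upper half-plane, the sum over n₁ ∈ ℤ of (-1)^{n₁} q^{(a/2)(n₁ + (b/a)n₂)²} vanishes, where q = e^{2πiτ}. Consequently the double theta series Σ_{(n₁,n₂) ∈ ℤ² + (0,α₂)} (-1)^{n₁} q^{(1/2)(an₁² + 2bn₁n₂ + cn₂²)} is identically zero. -/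
open Complex

lemma neg_one_zpow_aux (k n : ℤ) : (-1 : ℂ) ^ (-(2 * k + 1) - n) = -(-1 : ℂ) ^ n := by
  have h : (-1 : ℂ) ≠ 0 := by norm_num
  rw [zpow_sub₀ h, zpow_neg, zpow_add₀ h, zpow_mul]
  norm_num
  rw [div_eq_iff (zpow_ne_zero n h), neg_mul, ← zpow_add₀ h, ← two_mul, zpow_mul]
  norm_num

lemma tsum_self_neg {α : Type*} (f : α → ℂ) (e : α ≃ α)
    (h : ∀ x, f (e x) = -f x) : ∑' x, f x = 0 := by
  have h1 : ∑' x, f (e x) = ∑' x, f x := e.tsum_eq f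
  have h2 : ∑' x, f (e x) = -∑' x, f x := by
    simp_rw [h]; exact tsum_neg
  have := h1.symm.trans h2
  linear_combination this / 2

theorem double_theta_vanishes (a b c : ℤ) (ha : 0 < a) (hΔ : 0 < a * c - b ^ 2)
    (α₂ : ℚ) (hdiv : a ∣ b) (hhalf : ∃ m : ℤ, (b / a : ℚ) * α₂ = 1 / 2 + m)
    (τ : ℂ) (hτ : 0 < τ.im) :
    (∀ n₂ : ℝ, (∃ m : ℤ, n₂ = (m : ℝ) + (α₂ : ℝ)) →
      ∑' n₁ : ℤ, (-1 : ℂ) ^ n₁ *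
        Complex.exp (Real.pi * Complex.I * τ * (a : ℂ) *
          ((n₁ : ℂ) + ((b / a : ℚ) : ℝ) * (n₂ : ℝ)) ^ 2) = 0) ∧
    ∑' n : ℤ × ℤ, (-1 : ℂ) ^ n.1 *
      Complex.exp (Real.pi * Complex.I * τ *
        ((a : ℂ) * (n.1 : ℂ) ^ 2 + 2 * (b : ℂ) * (n.1 : ℂ) * ((n.2 : ℂ) + (α₂ : ℝ))
          + (c : ℂ) * ((n.2 : ℂ) + (α₂ : ℝ)) ^ 2)) = 0 := by
  obtain ⟨β, hb⟩ := hdiv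
  have ha0 : (a : ℚ) ≠ 0 := by exact_mod_cast ha.ne'
  have hba : (b / a : ℚ) = (β : ℚ) := by
    rw [div_eq_iff ha0]; push_cast [hb]; ring
  obtain ⟨m, hm⟩ := hhalf
  rw [hba] at hm
  -- hm : (β:ℚ) * α₂ = 1/2 + m
  have hmC : (β : ℂ) * (α₂ : ℝ) = 1 / 2 + m := by
    have := congrArg (fun q : ℚ => ((q : ℝ) : ℂ)) hm
    push_cast at this ⊢
    convert this using 2
  constructor
  · rintro n₂ ⟨m', rfl⟩
    set k : ℤ := β * m' + m with hk
    apply tsum_self_neg _ (Equiv.subLeft (-(2 * k + 1)))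
    intro n₁
    simp only [Equiv.subLeft_apply]
    rw [neg_one_zpow_aux k n₁]
    have hsq : ((-(2 * k + 1) - n₁ : ℤ) : ℂ) + ((b / a : ℚ) : ℝ) * (((m' : ℝ) + (α₂ : ℝ)) : ℝ)
        = -(((n₁ : ℤ) : ℂ) + ((b / a : ℚ) : ℝ) * (((m' : ℝ) + (α₂ : ℝ)) : ℝ)) := by
      rw [hba]
      push_cast [hk]
      linear_combination 2 * hmC
    rw [show (((-(2 * k + 1) - n₁ : ℤ) : ℂ) + ((b / a : ℚ) : ℝ) * (((m' : ℝ) + (α₂ : ℝ)) : ℝ)) ^ 2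
        = (((n₁ : ℤ) : ℂ) + ((b / a : ℚ) : ℝ) * (((m' : ℝ) + (α₂ : ℝ)) : ℝ)) ^ 2 by
      rw [hsq]; ring]
    ring
  · refine tsum_self_neg _ ⟨fun p => (-(2 * (β * p.2 + m) + 1) - p.1, p.2),
      fun p => (-(2 * (β * p.2 + m) + 1) - p.1, p.2), fun p => by simp, fun p => by simp⟩ ?_
    rintro ⟨n₁, n₂⟩
    simp only [Equiv.coe_fn_mk]
    rw [neg_one_zpow_aux (β * n₂ + m) n₁]
    have hexp : (a : ℂ) * ((-(2 * (β * n₂ + m) + 1) - n₁ : ℤ) : ℂ) ^ 2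
          + 2 * (b : ℂ) * ((-(2 * (β * n₂ + m) + 1) - n₁ : ℤ) : ℂ) * ((n₂ : ℂ) + (α₂ : ℝ))
          + (c : ℂ) * ((n₂ : ℂ) + (α₂ : ℝ)) ^ 2
        = (a : ℂ) * (n₁ : ℂ) ^ 2 + 2 * (b : ℂ) * (n₁ : ℂ) * ((n₂ : ℂ) + (α₂ : ℝ))
          + (c : ℂ) * ((n₂ : ℂ) + (α₂ : ℝ)) ^ 2 := by
      have hbC : (b : ℂ) = (a : ℂ) * β := by exact_mod_cast congrArg (fun z : ℤ => (z : ℂ)) hb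
      push_cast [hbC]
      linear_combination (2 * (a : ℂ) * (-(2 * ((β : ℂ) * n₂ + m) + 1) - 2 * n₁)) * hmC
    rw [hexp]
    ring
end

section
/- For q a complex number with |q| < 1, the Dedekind-eta-type cube identity holds: q^{1/8} Π_{n≥1}(1-qⁿ)³ = Σ_{n∈ℤ} (-1)^n (n + 1/2) q^{(1/2)(n+1/2)²}. -/
open Complex
open Finset Filter Topology

noncomputable section

namespace JacobiAux

/-- partial q-Pochhammer product -/
def Pf (q : ℂ) (n : ℕ) : ℂ := ∏ k ∈ Finset.range n, (1 - q ^ (k + 1))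

/-- Gaussian binomial (as ratio), zero out of range -/
def Bq (q : ℂ) (m : ℕ) (k : ℤ) : ℂ :=
  if 0 ≤ k ∧ k ≤ m then Pf q m / (Pf q k.toNat * Pf q (m - k.toNat)) else 0

/-- triangular-number exponent -/
def e (j : ℤ) : ℕ := (j * (j + 1) / 2).toNat

lemma e_arith (j : ℤ) : (j + 1) * (j + 2) = j * (j + 1) + 2 * (j + 1) := by ring

lemma e_dvd (j : ℤ) : 2 ∣ j * (j + 1) := (Int.even_mul_succ_self j).two_dvd

lemma e_succ (j : ℤ) : (e (j + 1) : ℤ) = (e j : ℤ) + (j + 1) := by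
  unfold e
  have h1 : (j + 1) * (j + 1 + 1) = j * (j + 1) + 2 * (j + 1) := by ring
  have h2 := e_dvd j
  have h4 : 0 ≤ j * (j + 1) := by nlinarith [sq_nonneg (2 * j + 1)]
  have h5 : 0 ≤ (j + 1) * (j + 1 + 1) := by nlinarith [sq_nonneg (2 * j + 3)]
  omega

lemma e_neg (j : ℤ) : e (-j - 1) = e j := by
  unfold e
  have h1 : (-j - 1) * (-j - 1 + 1) = j * (j + 1) := by ring
  rw [h1]

variable {q : ℂ} (hq : ∀ i : ℕ, q ^ (i + 1) ≠ 1)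

lemma Pf_zero (q : ℂ) : Pf q 0 = 1 := by simp [Pf]

lemma Pf_succ (q : ℂ) (n : ℕ) : Pf q (n + 1) = Pf q n * (1 - q ^ (n + 1)) :=
  Finset.prod_range_succ _ _

include hq in
lemma Pf_ne_zero (n : ℕ) : Pf q n ≠ 0 := by
  refine Finset.prod_ne_zero_iff.2 fun k _ => ?_
  intro h
  exact hq k (by linear_combination -h)

lemma Bq_out {m : ℕ} {k : ℤ} (h : ¬(0 ≤ k ∧ k ≤ m)) : Bq q m k = 0 := if_neg h

include hq in
lemma Bq_left (m : ℕ) : Bq q m 0 = 1 := by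
  rw [Bq, if_pos ⟨le_refl _, Int.ofNat_nonneg m⟩]
  simp [Pf_zero, div_self (Pf_ne_zero hq m)]

include hq in
lemma Bq_right (m : ℕ) : Bq q m m = 1 := by
  rw [Bq, if_pos ⟨Int.ofNat_nonneg m, le_refl _⟩]
  simp [Pf_zero, div_self (Pf_ne_zero hq m)]

include hq in
lemma pascal2 (m : ℕ) (k : ℤ) :
    Bq q (m + 1) k = Bq q m (k - 1) + q ^ k.toNat * Bq q m k := by
  rcases lt_or_ge k 0 with hk | hk
  · rw [Bq_out (by omega), Bq_out (by omega), Bq_out (by omega)]; ring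
  rcases eq_or_lt_of_le hk with hk0 | hkpos
  · -- k = 0
    rw [← hk0, Bq_left hq, Bq_out (by omega), Bq_left hq]
    simp
  rcases lt_or_ge (m : ℤ) k with hk2 | hk2
  · rcases eq_or_lt_of_le (by omega : (m : ℤ) + 1 ≤ k) with hk3 | hk3
    · -- k = m + 1
      have hkk : k = ((m + 1 : ℕ) : ℤ) := by push_cast; omega
      have e1 : Bq q (m + 1) k = 1 := by rw [hkk]; exact Bq_right hq (m + 1)
      have e2 : Bq q m (k - 1) = 1 := by
        have : k - 1 = ((m : ℕ) : ℤ) := by omega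
        rw [this]; exact Bq_right hq m
      have e3 : Bq q m k = 0 := Bq_out (by omega)
      rw [e1, e2, e3]; ring
    · rw [Bq_out (by omega), Bq_out (by omega), Bq_out (by omega)]; ring
  -- interior: 1 ≤ k ≤ m
  obtain ⟨a, rfl⟩ : ∃ a : ℕ, k = (a : ℤ) := ⟨k.toNat, by omega⟩
  have ha1 : 1 ≤ a := by omega
  have ham : a ≤ m := by omega
  obtain ⟨b, rfl⟩ : ∃ b, a = b + 1 := ⟨a - 1, by omega⟩
  obtain ⟨c, hc⟩ : ∃ c, m = (b + 1) + c := ⟨m - (b + 1), by omega⟩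
  subst hc
  rw [Bq, if_pos (by constructor <;> push_cast <;> omega),
      Bq, if_pos (by constructor <;> push_cast <;> omega),
      Bq, if_pos (by constructor <;> push_cast <;> omega)]
  have h1 : (((b + 1 : ℕ) : ℤ)).toNat = b + 1 := by omega
  have h2 : ((((b + 1 : ℕ) : ℤ)) - 1).toNat = b := by omega
  rw [h1, h2]
  have h3 : b + 1 + c + 1 - (b + 1) = c + 1 := by omega
  have h4 : b + 1 + c - b = c + 1 := by omega
  have h5 : b + 1 + c - (b + 1) = c := by omega
  rw [h3, h4, h5]
  rw [Pf_succ q (b + 1 + c), Pf_succ q b, Pf_succ q c]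
  have hb := Pf_ne_zero hq b
  have hc' := Pf_ne_zero hq c
  have hb1 : (1 : ℂ) - q ^ (b + 1) ≠ 0 := by
    intro h; exact hq b (by linear_combination -h)
  have hc1 : (1 : ℂ) - q ^ (c + 1) ≠ 0 := by
    intro h; exact hq c (by linear_combination -h)
  field_simp
  ring

include hq in
lemma pascal1 (m : ℕ) (k : ℤ) :
    Bq q (m + 1) k = Bq q m k + q ^ (((m : ℤ) + 1 - k).toNat) * Bq q m (k - 1) := by
  rcases lt_or_ge k 0 with hk | hk
  · rw [Bq_out (by omega), Bq_out (by omega), Bq_out (by omega)]; ring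
  rcases eq_or_lt_of_le hk with hk0 | hkpos
  · -- k = 0
    rw [← hk0, Bq_left hq, Bq_left hq, Bq_out (by omega)]; ring
  rcases lt_or_ge (m : ℤ) k with hk2 | hk2
  · rcases eq_or_lt_of_le (by omega : (m : ℤ) + 1 ≤ k) with hk3 | hk3
    · -- k = m + 1
      have hkk : k = ((m + 1 : ℕ) : ℤ) := by push_cast; omega
      have e1 : Bq q (m + 1) k = 1 := by rw [hkk]; exact Bq_right hq (m + 1)
      have e2 : Bq q m (k - 1) = 1 := by
        have : k - 1 = ((m : ℕ) : ℤ) := by omega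
        rw [this]; exact Bq_right hq m
      have e3 : Bq q m k = 0 := Bq_out (by omega)
      have h1 : ((m : ℤ) + 1 - k).toNat = 0 := by omega
      rw [e1, e2, e3, h1]; ring
    · rw [Bq_out (by omega), Bq_out (by omega), Bq_out (by omega)]; ring
  -- interior
  obtain ⟨a, rfl⟩ : ∃ a : ℕ, k = (a : ℤ) := ⟨k.toNat, by omega⟩
  have ha1 : 1 ≤ a := by omega
  obtain ⟨b, rfl⟩ : ∃ b, a = b + 1 := ⟨a - 1, by omega⟩
  obtain ⟨c, hc⟩ : ∃ c, m = (b + 1) + c := ⟨m - (b + 1), by omega⟩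
  subst hc
  rw [Bq, if_pos (by constructor <;> push_cast <;> omega),
      Bq, if_pos (by constructor <;> push_cast <;> omega),
      Bq, if_pos (by constructor <;> push_cast <;> omega)]
  have h1 : (((b + 1 : ℕ) : ℤ)).toNat = b + 1 := by omega
  have h2 : ((((b + 1 : ℕ) : ℤ)) - 1).toNat = b := by omega
  have h6 : ((((b + 1 + c : ℕ) : ℤ)) + 1 - (((b + 1 : ℕ) : ℤ))).toNat = c + 1 := by omega
  rw [h1, h2, h6]
  have h3 : b + 1 + c + 1 - (b + 1) = c + 1 := by omega
  have h4 : b + 1 + c - b = c + 1 := by omega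
  have h5 : b + 1 + c - (b + 1) = c := by omega
  rw [h3, h4, h5]
  rw [Pf_succ q (b + 1 + c), Pf_succ q b, Pf_succ q c]
  have hb := Pf_ne_zero hq b
  have hc' := Pf_ne_zero hq c
  have hb1 : (1 : ℂ) - q ^ (b + 1) ≠ 0 := by
    intro h; exact hq b (by linear_combination -h)
  have hc1 : (1 : ℂ) - q ^ (c + 1) ≠ 0 := by
    intro h; exact hq c (by linear_combination -h)
  field_simp
  ring


include hq in
lemma stepA (n : ℕ) (z : ℂ) (hz : z ≠ 0) :
    (∑ j ∈ Finset.Icc (-(n : ℤ)) n,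
        (-1 : ℂ) ^ j * q ^ e j * Bq q (2 * n) ((n : ℤ) + j) * z ^ j) * (1 - z * q ^ (n + 1))
    = ∑ j ∈ Finset.Icc (-(n : ℤ)) ((n : ℤ) + 1),
        (-1 : ℂ) ^ j * q ^ e j * Bq q (2 * n + 1) ((n : ℤ) + j) * z ^ j := by
  have hsplit : ∀ j ∈ Finset.Icc (-(n : ℤ)) ((n : ℤ) + 1),
      (-1 : ℂ) ^ j * q ^ e j * Bq q (2 * n + 1) ((n : ℤ) + j) * z ^ j
      = (-1 : ℂ) ^ j * q ^ e j * Bq q (2 * n) ((n : ℤ) + j) * z ^ j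
        + (-1 : ℂ) ^ j * (q ^ e j * q ^ (((2 * n : ℕ) : ℤ) + 1 - ((n : ℤ) + j)).toNat)
            * Bq q (2 * n) ((n : ℤ) + j - 1) * z ^ j := by
    intro j hj
    rw [pascal1 hq (2 * n) ((n : ℤ) + j)]
    ring
  rw [Finset.sum_congr rfl hsplit, Finset.sum_add_distrib]
  have hS1 : ∑ j ∈ Finset.Icc (-(n : ℤ)) ((n : ℤ) + 1),
      (-1 : ℂ) ^ j * q ^ e j * Bq q (2 * n) ((n : ℤ) + j) * z ^ j
      = ∑ j ∈ Finset.Icc (-(n : ℤ)) (n : ℤ),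
      (-1 : ℂ) ^ j * q ^ e j * Bq q (2 * n) ((n : ℤ) + j) * z ^ j := by
    refine (Finset.sum_subset (Finset.Icc_subset_Icc le_rfl (by omega)) ?_).symm
    intro x hx hnx
    simp only [Finset.mem_Icc] at hx hnx
    rw [Bq_out (by push_cast; omega)]
    ring
  have hS2 : ∑ j ∈ Finset.Icc (-(n : ℤ)) ((n : ℤ) + 1),
      (-1 : ℂ) ^ j * (q ^ e j * q ^ (((2 * n : ℕ) : ℤ) + 1 - ((n : ℤ) + j)).toNat)
          * Bq q (2 * n) ((n : ℤ) + j - 1) * z ^ j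
      = ∑ j ∈ Finset.Icc (-(n : ℤ) + 1) ((n : ℤ) + 1),
      (-1 : ℂ) ^ j * (q ^ e j * q ^ (((2 * n : ℕ) : ℤ) + 1 - ((n : ℤ) + j)).toNat)
          * Bq q (2 * n) ((n : ℤ) + j - 1) * z ^ j := by
    refine (Finset.sum_subset (Finset.Icc_subset_Icc (by omega) le_rfl) ?_).symm
    intro x hx hnx
    simp only [Finset.mem_Icc] at hx hnx
    rw [Bq_out (by push_cast; omega)]
    ring
  rw [hS1, hS2]
  have hmap : Finset.Icc (-(n : ℤ) + 1) ((n : ℤ) + 1)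
      = Finset.map (addRightEmbedding 1) (Finset.Icc (-(n : ℤ)) (n : ℤ)) := by
    rw [Finset.map_add_right_Icc]
  rw [hmap, Finset.sum_map]
  rw [mul_one_sub, Finset.sum_mul]
  rw [sub_eq_add_neg, ← Finset.sum_neg_distrib]
  congr 1
  refine Finset.sum_congr rfl ?_
  intro j hj
  simp only [Finset.mem_Icc] at hj
  simp only [addRightEmbedding_apply]
  have h1 : (n : ℤ) + (j + 1) - 1 = (n : ℤ) + j := by ring
  rw [h1]
  have hexp : e (j + 1) + (((2 * n : ℕ) : ℤ) + 1 - ((n : ℤ) + (j + 1))).toNat = e j + (n + 1) := by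
    have := e_succ j
    push_cast
    omega
  have hq2 : q ^ e (j + 1) * q ^ (((2 * n : ℕ) : ℤ) + 1 - ((n : ℤ) + (j + 1))).toNat
      = q ^ e j * q ^ (n + 1) := by
    rw [← pow_add, ← pow_add, hexp]
  rw [hq2, zpow_add_one₀ (by norm_num : (-1 : ℂ) ≠ 0) j, zpow_add_one₀ hz j]
  ring

include hq in
lemma stepB (n : ℕ) (z : ℂ) (hz : z ≠ 0) :
    (∑ j ∈ Finset.Icc (-(n : ℤ)) ((n : ℤ) + 1),
        (-1 : ℂ) ^ j * q ^ e j * Bq q (2 * n + 1) ((n : ℤ) + j) * z ^ j) * (1 - q ^ n * z⁻¹)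
    = ∑ j ∈ Finset.Icc (-(n : ℤ) - 1) ((n : ℤ) + 1),
        (-1 : ℂ) ^ j * q ^ e j * Bq q (2 * n + 2) ((n : ℤ) + 1 + j) * z ^ j := by
  have hsplit : ∀ j ∈ Finset.Icc (-(n : ℤ) - 1) ((n : ℤ) + 1),
      (-1 : ℂ) ^ j * q ^ e j * Bq q (2 * n + 2) ((n : ℤ) + 1 + j) * z ^ j
      = (-1 : ℂ) ^ j * q ^ e j * Bq q (2 * n + 1) ((n : ℤ) + j) * z ^ j
        + (-1 : ℂ) ^ j * (q ^ e j * q ^ ((n : ℤ) + 1 + j).toNat)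
            * Bq q (2 * n + 1) ((n : ℤ) + 1 + j) * z ^ j := by
    intro j hj
    have h0 : (2 * n + 2) = (2 * n + 1) + 1 := by omega
    rw [h0, pascal2 hq (2 * n + 1) ((n : ℤ) + 1 + j)]
    have h1 : (n : ℤ) + 1 + j - 1 = (n : ℤ) + j := by ring
    rw [h1]
    ring
  rw [Finset.sum_congr rfl hsplit, Finset.sum_add_distrib]
  have hS1 : ∑ j ∈ Finset.Icc (-(n : ℤ) - 1) ((n : ℤ) + 1),
      (-1 : ℂ) ^ j * q ^ e j * Bq q (2 * n + 1) ((n : ℤ) + j) * z ^ j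
      = ∑ j ∈ Finset.Icc (-(n : ℤ)) ((n : ℤ) + 1),
      (-1 : ℂ) ^ j * q ^ e j * Bq q (2 * n + 1) ((n : ℤ) + j) * z ^ j := by
    refine (Finset.sum_subset (Finset.Icc_subset_Icc (by omega) le_rfl) ?_).symm
    intro x hx hnx
    simp only [Finset.mem_Icc] at hx hnx
    rw [Bq_out (by push_cast; omega)]
    ring
  have hS2 : ∑ j ∈ Finset.Icc (-(n : ℤ) - 1) ((n : ℤ) + 1),
      (-1 : ℂ) ^ j * (q ^ e j * q ^ ((n : ℤ) + 1 + j).toNat)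
          * Bq q (2 * n + 1) ((n : ℤ) + 1 + j) * z ^ j
      = ∑ j ∈ Finset.Icc (-(n : ℤ) - 1) (n : ℤ),
      (-1 : ℂ) ^ j * (q ^ e j * q ^ ((n : ℤ) + 1 + j).toNat)
          * Bq q (2 * n + 1) ((n : ℤ) + 1 + j) * z ^ j := by
    refine (Finset.sum_subset (Finset.Icc_subset_Icc le_rfl (by omega)) ?_).symm
    intro x hx hnx
    simp only [Finset.mem_Icc] at hx hnx
    rw [Bq_out (by push_cast; omega)]
    ring
  rw [hS1, hS2]
  have hmap : Finset.Icc (-(n : ℤ) - 1) (n : ℤ)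
      = Finset.map (addRightEmbedding (-1)) (Finset.Icc (-(n : ℤ)) ((n : ℤ) + 1)) := by
    rw [Finset.map_add_right_Icc]
    congr 1 <;> ring
  rw [hmap, Finset.sum_map]
  rw [mul_one_sub, Finset.sum_mul]
  rw [sub_eq_add_neg, ← Finset.sum_neg_distrib]
  congr 1
  refine Finset.sum_congr rfl ?_
  intro j hj
  simp only [Finset.mem_Icc] at hj
  simp only [addRightEmbedding_apply]
  have h1 : (n : ℤ) + 1 + (j + -1) = (n : ℤ) + j := by ring
  rw [h1]
  have hexp : e (j + -1) + ((n : ℤ) + j).toNat = e j + n := by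
    have := e_succ (j - 1)
    have h2 : j - 1 + 1 = j := by ring
    rw [h2] at this
    have h3 : j + -1 = j - 1 := by ring
    rw [h3]
    omega
  have hq2 : q ^ e (j + -1) * q ^ ((n : ℤ) + j).toNat = q ^ e j * q ^ n := by
    rw [← pow_add, ← pow_add, hexp]
  have hsgn : (-1 : ℂ) ^ (j + -1) = -(-1 : ℂ) ^ j := by
    rw [zpow_add₀ (by norm_num : (-1 : ℂ) ≠ 0)]
    norm_num
  have hzp : z ^ (j + -1) = z ^ j * z⁻¹ := by
    rw [zpow_add₀ hz]
    norm_num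
  rw [hq2, hsgn, hzp]
  ring

include hq in
lemma jtp (n : ℕ) (z : ℂ) (hz : z ≠ 0) :
    (∏ k ∈ Finset.range n, (1 - z * q ^ (k + 1))) * (∏ k ∈ Finset.range n, (1 - q ^ k * z⁻¹))
    = ∑ j ∈ Finset.Icc (-(n : ℤ)) (n : ℤ),
        (-1 : ℂ) ^ j * q ^ e j * Bq q (2 * n) ((n : ℤ) + j) * z ^ j := by
  induction n with
  | zero =>
    simp only [Finset.range_zero, Finset.prod_empty, one_mul, Nat.cast_zero, neg_zero]
    rw [show Finset.Icc (0 : ℤ) 0 = {0} from rfl, Finset.sum_singleton]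
    simp [e, Bq_left hq]
  | succ n ih =>
    rw [Finset.prod_range_succ, Finset.prod_range_succ]
    have hre : (∏ k ∈ Finset.range n, (1 - z * q ^ (k + 1))) * (1 - z * q ^ (n + 1)) *
        ((∏ k ∈ Finset.range n, (1 - q ^ k * z⁻¹)) * (1 - q ^ n * z⁻¹))
        = (((∏ k ∈ Finset.range n, (1 - z * q ^ (k + 1))) *
            (∏ k ∈ Finset.range n, (1 - q ^ k * z⁻¹))) * (1 - z * q ^ (n + 1))) *
          (1 - q ^ n * z⁻¹) := by ring
    rw [hre, ih, stepA hq n z hz, stepB hq n z hz]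
    have hc1 : -((n : ℤ) + 1) = -(n : ℤ) - 1 := by ring
    have hc2 : ∀ j : ℤ, ((n + 1 : ℕ) : ℤ) + j = (n : ℤ) + 1 + j := by intro j; push_cast; ring
    rw [show ((n + 1 : ℕ) : ℤ) = (n : ℤ) + 1 by push_cast; ring]
    rw [show 2 * (n + 1) = 2 * n + 2 by omega]
    rw [hc1]


lemma diff_prod_at_one (m : ℕ) (g : ℕ → ℂ → ℂ) (hg : ∀ k, DifferentiableAt ℂ (g k) 1) :
    DifferentiableAt ℂ (fun z => ∏ k ∈ Finset.range m, g k z) 1 := by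
  induction m with
  | zero => simpa using differentiableAt_const (1 : ℂ)
  | succ m ih =>
    simp only [Finset.prod_range_succ]
    exact ih.mul (hg m)

include hq in
lemma key (n : ℕ) :
    Pf q (n + 1) * Pf q n
    = ∑ j ∈ Finset.Icc (-(n : ℤ) - 1) ((n : ℤ) + 1),
        (-1 : ℂ) ^ j * (j : ℂ) * q ^ e j * Bq q (2 * n + 2) ((n : ℤ) + 1 + j) := by
  classical
  set s := Finset.Icc (-(n : ℤ) - 1) ((n : ℤ) + 1) with hs
  set c : ℤ → ℂ := fun j => (-1 : ℂ) ^ j * q ^ e j * Bq q (2 * n + 2) ((n : ℤ) + 1 + j) with hc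
  set H : ℂ → ℂ := fun z => (∏ k ∈ Finset.range (n + 1), (1 - z * q ^ (k + 1))) *
      (∏ k ∈ Finset.range n, (1 - q ^ (k + 1) * z⁻¹)) with hH
  have hG : HasDerivAt (fun z : ℂ => ∑ j ∈ s, c j * z ^ j)
      (∑ j ∈ s, c j * ((j : ℂ) * (1 : ℂ) ^ (j - 1))) 1 := by
    apply HasDerivAt.fun_sum
    intro j hj
    exact (hasDerivAt_zpow j 1 (Or.inl one_ne_zero)).const_mul (c j)
  have hHd : DifferentiableAt ℂ H 1 := by
    apply DifferentiableAt.mul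
    · apply diff_prod_at_one
      intro k
      exact (differentiableAt_id.mul_const (q ^ (k + 1))).const_sub 1
    · apply diff_prod_at_one
      intro k
      exact ((differentiableAt_inv one_ne_zero).const_mul (q ^ (k + 1))).const_sub 1
  obtain ⟨d, hHdd⟩ : ∃ d, HasDerivAt H d 1 := ⟨_, hHd.hasDerivAt⟩
  have h1 : HasDerivAt (fun z : ℂ => 1 - z⁻¹) 1 1 := by
    have h := (hasDerivAt_inv (one_ne_zero : (1 : ℂ) ≠ 0)).const_sub 1
    exact h.congr_deriv (by norm_num)
  have hF : HasDerivAt (fun z : ℂ => (1 - z⁻¹) * H z) (1 * H 1 + (1 - (1 : ℂ)⁻¹) * d) 1 :=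
    h1.mul hHdd
  have heq : (fun z : ℂ => ∑ j ∈ s, c j * z ^ j) =ᶠ[𝓝 1] (fun z : ℂ => (1 - z⁻¹) * H z) := by
    filter_upwards [eventually_ne_nhds (one_ne_zero : (1 : ℂ) ≠ 0)] with z hz
    have hj := jtp hq (n + 1) z hz
    rw [show ((n + 1 : ℕ) : ℤ) = (n : ℤ) + 1 by push_cast; ring,
        show 2 * (n + 1) = 2 * n + 2 by ring,
        show -((n : ℤ) + 1) = -(n : ℤ) - 1 by ring] at hj
    have hsum : ∑ j ∈ s, c j * z ^ j
        = ∑ j ∈ Finset.Icc (-(n : ℤ) - 1) ((n : ℤ) + 1),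
            (-1 : ℂ) ^ j * q ^ e j * Bq q (2 * n + 2) ((n : ℤ) + 1 + j) * z ^ j := by
      refine Finset.sum_congr rfl fun j hj => ?_
      rw [hc]
    rw [hsum, ← hj]
    have hp0 : ∏ k ∈ Finset.range (n + 1), (1 - q ^ k * z⁻¹)
        = (∏ k ∈ Finset.range n, (1 - q ^ (k + 1) * z⁻¹)) * (1 - q ^ 0 * z⁻¹) :=
      Finset.prod_range_succ' (fun k => 1 - q ^ k * z⁻¹) n
    rw [hp0, hH]
    simp only [pow_zero, one_mul]
    ring
  have hG' : HasDerivAt (fun z : ℂ => ∑ j ∈ s, c j * z ^ j)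
      (1 * H 1 + (1 - (1 : ℂ)⁻¹) * d) 1 := hF.congr_of_eventuallyEq heq
  have huniq := hG'.unique hG
  have hH1 : H 1 = Pf q (n + 1) * Pf q n := by
    rw [hH]
    simp only [inv_one, mul_one, one_mul]
    rfl
  have hval : (1 : ℂ) * H 1 + (1 - (1 : ℂ)⁻¹) * d = Pf q (n + 1) * Pf q n := by
    rw [hH1]
    norm_num
  rw [hval] at huniq
  rw [huniq]
  refine Finset.sum_congr rfl fun j hj => ?_
  rw [hc]
  simp only [one_zpow]
  ring


lemma e_lb (j : ℤ) : (j.natAbs : ℕ) - 1 ≤ e j := by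
  have hd := e_dvd j
  have h4 : 0 ≤ j * (j + 1) := by nlinarith [sq_nonneg (2 * j + 1)]
  rcases le_or_gt 0 j with hj | hj
  · have h1 : 2 * j ≤ j * (j + 1) := by nlinarith
    unfold e
    omega
  · have h1 : 2 * (-j - 1) ≤ j * (j + 1) := by nlinarith [sq_nonneg (2 * j + 3)]
    unfold e
    omega

lemma one_sub_sum_le_prod (s : Finset ℕ) (f : ℕ → ℝ) (h0 : ∀ i ∈ s, 0 ≤ f i)
    (h1 : ∀ i ∈ s, f i ≤ 1) :
    1 - ∑ i ∈ s, f i ≤ ∏ i ∈ s, (1 - f i) := by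
  classical
  induction s using Finset.cons_induction with
  | empty => simp
  | cons a s ha ih =>
    rw [Finset.sum_cons, Finset.prod_cons]
    have hha := h0 a (Finset.mem_cons_self a s)
    have hha1 := h1 a (Finset.mem_cons_self a s)
    have ih' := ih (fun i hi => h0 i (Finset.mem_cons_of_mem hi))
      (fun i hi => h1 i (Finset.mem_cons_of_mem hi))
    have hsn : 0 ≤ ∑ i ∈ s, f i :=
      Finset.sum_nonneg fun i hi => h0 i (Finset.mem_cons_of_mem hi)
    nlinarith [mul_le_mul_of_nonneg_left ih' (by linarith : (0:ℝ) ≤ 1 - f a)]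

section Analytic

variable {q : ℂ} (hq1 : ‖q‖ < 1)

include hq1 in
lemma hqne : ∀ i : ℕ, q ^ (i + 1) ≠ 1 := by
  intro i h
  have : ‖q ^ (i + 1)‖ < 1 := by
    rw [norm_pow]
    exact pow_lt_one₀ (norm_nonneg q) hq1 (Nat.succ_ne_zero i)
  rw [h] at this
  simp at this

include hq1 in
lemma hsumr : Summable (fun n : ℕ => ‖q‖ ^ (n + 1)) := by
  have := (summable_geometric_of_lt_one (norm_nonneg q) hq1).mul_right ‖q‖
  refine this.congr fun n => ?_
  rw [← pow_succ]

include hq1 in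
lemma hlogsum : Summable (fun n : ℕ => Complex.log (1 - q ^ (n + 1))) := by
  apply Summable.of_norm_bounded_eventually_nat (g := fun n => 3 / 2 * ‖q‖ ^ (n + 1))
    ((hsumr hq1).mul_left (3 / 2))
  have hto : Filter.Tendsto (fun n : ℕ => ‖q‖ ^ (n + 1)) atTop (𝓝 0) := by
    have := (tendsto_pow_atTop_nhds_zero_of_lt_one (norm_nonneg q) hq1)
    exact this.comp (tendsto_add_atTop_nat 1)
  have hev : ∀ᶠ n : ℕ in atTop, ‖q‖ ^ (n + 1) ≤ 1 / 2 :=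
    hto.eventually_le_const (by norm_num)
  filter_upwards [hev] with n hn
  have : ‖(-(q ^ (n + 1)))‖ ≤ 1 / 2 := by rwa [norm_neg, norm_pow]
  have hb := Complex.norm_log_one_add_half_le_self this
  rw [show (1 : ℂ) + -(q ^ (n + 1)) = 1 - q ^ (n + 1) by ring] at hb
  rw [norm_neg, norm_pow] at hb
  exact hb

include hq1 in
lemma hasProdP : HasProd (fun n : ℕ => 1 - q ^ (n + 1))
    (Complex.exp (∑' n : ℕ, Complex.log (1 - q ^ (n + 1)))) := by
  have h := (hlogsum hq1).hasSum.cexp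
  have hfg : (Complex.exp ∘ fun n : ℕ => Complex.log (1 - q ^ (n + 1)))
      = fun n : ℕ => 1 - q ^ (n + 1) := by
    funext n
    exact Complex.exp_log (by
      intro h0
      exact hqne hq1 n (by linear_combination -h0))
  rwa [hfg] at h

include hq1 in
lemma Pne : (∏' n : ℕ, (1 - q ^ (n + 1))) ≠ 0 := by
  rw [(hasProdP hq1).tprod_eq]
  exact Complex.exp_ne_zero _

include hq1 in
lemma htendP : Filter.Tendsto (fun n => Pf q n) atTop (𝓝 (∏' n : ℕ, (1 - q ^ (n + 1)))) := by
  have := (hasProdP hq1).tendsto_prod_nat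
  rwa [(hasProdP hq1).tprod_eq]

include hq1 in
lemma lowerD : ∃ D : ℝ, 0 < D ∧ ∀ m : ℕ, D ≤ ∏ k ∈ Finset.range m, (1 - ‖q‖ ^ (k + 1)) := by
  set r := ‖q‖ with hr
  have hr0 : 0 ≤ r := norm_nonneg q
  have hfac0 : ∀ k : ℕ, 0 ≤ 1 - r ^ (k + 1) := fun k => by
    have : r ^ (k + 1) ≤ 1 := pow_le_one₀ hr0 hq1.le
    linarith
  have hfac1 : ∀ k : ℕ, 1 - r ^ (k + 1) ≤ 1 := fun k => by
    have : 0 ≤ r ^ (k + 1) := pow_nonneg hr0 _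
    linarith
  -- choose K with tail sum ≤ 1/2
  have htail : Filter.Tendsto (fun K : ℕ => r ^ (K + 1) * (1 - r)⁻¹) atTop (𝓝 0) := by
    have h1 : Filter.Tendsto (fun K : ℕ => r ^ (K + 1)) atTop (𝓝 0) :=
      (tendsto_pow_atTop_nhds_zero_of_lt_one hr0 hq1).comp (tendsto_add_atTop_nat 1)
    simpa using h1.mul_const (1 - r)⁻¹
  obtain ⟨K, hK⟩ : ∃ K : ℕ, r ^ (K + 1) * (1 - r)⁻¹ ≤ 1 / 2 :=
    (htail.eventually_le_const (by norm_num)).exists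
  set pK := ∏ k ∈ Finset.range K, (1 - r ^ (k + 1)) with hpK
  have hpK0 : 0 < pK ∨ pK = 0 := by
    rcases eq_or_lt_of_le (Finset.prod_nonneg fun k _ => hfac0 k : (0:ℝ) ≤ pK) with h | h
    · exact Or.inr h.symm
    · exact Or.inl h
  have hfacpos : ∀ k : ℕ, 0 < 1 - r ^ (k + 1) := fun k => by
    have : r ^ (k + 1) < 1 := pow_lt_one₀ hr0 hq1 (Nat.succ_ne_zero k)
    linarith
  have hpKpos : 0 < pK := Finset.prod_pos fun k _ => hfacpos k
  refine ⟨pK / 2, by positivity, fun m => ?_⟩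
  rcases le_or_gt m K with hm | hm
  · have : pK ≤ ∏ k ∈ Finset.range m, (1 - r ^ (k + 1)) := by
      rw [hpK, ← Finset.prod_range_mul_prod_Ico _ hm]
      have h2 : ∏ k ∈ Finset.Ico m K, (1 - r ^ (k + 1)) ≤ 1 :=
        Finset.prod_le_one (fun k _ => hfac0 k) (fun k _ => hfac1 k)
      have h3 : 0 < ∏ k ∈ Finset.range m, (1 - r ^ (k + 1)) :=
        Finset.prod_pos fun k _ => hfacpos k
      nlinarith
    linarith
  · rw [← Finset.prod_range_mul_prod_Ico _ hm.le]
    have hIco : (1 : ℝ) / 2 ≤ ∏ k ∈ Finset.Ico K m, (1 - r ^ (k + 1)) := by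
      have hsum : ∑ k ∈ Finset.Ico K m, r ^ (k + 1) ≤ 1 / 2 := by
        have h1 : ∑ k ∈ Finset.Ico K m, r ^ (k + 1)
            = ∑ i ∈ Finset.range (m - K), r ^ (K + i + 1) := by
          rw [Finset.sum_Ico_eq_sum_range]
        rw [h1]
        have h2 : ∑ i ∈ Finset.range (m - K), r ^ (K + i + 1)
            = r ^ (K + 1) * ∑ i ∈ Finset.range (m - K), r ^ i := by
          rw [Finset.mul_sum]
          exact Finset.sum_congr rfl fun i _ => by rw [← pow_add]; ring_nf
        rw [h2]
        have h3 : ∑ i ∈ Finset.range (m - K), r ^ i ≤ (1 - r)⁻¹ := by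
          have h5 : ∑ i ∈ Finset.range (m - K), r ^ i ≤ ∑' i : ℕ, r ^ i :=
            Summable.sum_le_tsum _ (fun i _ => by positivity)
              (summable_geometric_of_lt_one hr0 hq1)
          rwa [tsum_geometric_of_lt_one hr0 hq1] at h5
        calc r ^ (K + 1) * ∑ i ∈ Finset.range (m - K), r ^ i
            ≤ r ^ (K + 1) * (1 - r)⁻¹ := by
              apply mul_le_mul_of_nonneg_left h3 (by positivity)
          _ ≤ 1 / 2 := hK
      have := one_sub_sum_le_prod (Finset.Ico K m) (fun k => r ^ (k + 1))
        (fun i _ => by positivity) (fun i _ => by linarith [hfacpos i])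
      linarith
    have h4 : 0 < ∏ k ∈ Finset.Ico K m, (1 - r ^ (k + 1)) :=
      Finset.prod_pos fun k _ => hfacpos k
    nlinarith

include hq1 in
lemma upperU : ∀ m : ℕ, ‖Pf q m‖ ≤ Real.exp (∑' n : ℕ, ‖q‖ ^ (n + 1)) := by
  intro m
  have h1 : ‖Pf q m‖ ≤ ∏ k ∈ Finset.range m, (1 + ‖q‖ ^ (k + 1)) := by
    refine (Finset.norm_prod_le _ _).trans ?_
    apply Finset.prod_le_prod (fun k _ => norm_nonneg _)
    intro k _
    calc ‖1 - q ^ (k + 1)‖ ≤ ‖(1 : ℂ)‖ + ‖q ^ (k + 1)‖ := norm_sub_le _ _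
      _ = 1 + ‖q‖ ^ (k + 1) := by rw [norm_one, norm_pow]
  refine h1.trans ?_
  have h2 : ∏ k ∈ Finset.range m, (1 + ‖q‖ ^ (k + 1))
      ≤ ∏ k ∈ Finset.range m, Real.exp (‖q‖ ^ (k + 1)) := by
    apply Finset.prod_le_prod (fun k _ => by positivity)
    intro k _
    have := Real.add_one_le_exp (‖q‖ ^ (k + 1))
    linarith
  refine h2.trans ?_
  rw [← Real.exp_sum]
  apply Real.exp_le_exp.2
  exact Summable.sum_le_tsum _ (fun k _ => by positivity) (hsumr hq1)

include hq1 in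
lemma normPf_ge {D : ℝ} (hD : ∀ m : ℕ, D ≤ ∏ k ∈ Finset.range m, (1 - ‖q‖ ^ (k + 1)))
    (m : ℕ) : D ≤ ‖Pf q m‖ := by
  refine (hD m).trans ?_
  rw [Pf, norm_prod]
  apply Finset.prod_le_prod
  · intro k _
    have : ‖q‖ ^ (k + 1) ≤ 1 := pow_le_one₀ (norm_nonneg q) hq1.le
    linarith
  · intro k _
    calc 1 - ‖q‖ ^ (k + 1) = ‖(1 : ℂ)‖ - ‖q ^ (k + 1)‖ := by rw [norm_one, norm_pow]
      _ ≤ ‖1 - q ^ (k + 1)‖ := norm_sub_norm_le _ _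

include hq1 in
lemma Bq_bound {D : ℝ} (hD0 : 0 < D)
    (hD : ∀ m : ℕ, D ≤ ∏ k ∈ Finset.range m, (1 - ‖q‖ ^ (k + 1)))
    (m : ℕ) (k : ℤ) :
    ‖Bq q m k‖ ≤ Real.exp (∑' n : ℕ, ‖q‖ ^ (n + 1)) / (D * D) := by
  set U := Real.exp (∑' n : ℕ, ‖q‖ ^ (n + 1)) with hU
  have hU0 : 0 < U := Real.exp_pos _
  rw [Bq]
  split_ifs with h
  · rw [norm_div, norm_mul]
    apply div_le_div₀ hU0.le (upperU hq1 m) (by positivity)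
    have g1 := normPf_ge hq1 hD k.toNat
    have g2 := normPf_ge hq1 hD (m - k.toNat)
    nlinarith [norm_nonneg (Pf q k.toNat), norm_nonneg (Pf q (m - k.toNat))]
  · simp only [norm_zero]
    positivity

lemma summable_weight (r : ℝ) (hr0 : 0 ≤ r) (hr1 : r < 1) :
    Summable (fun j : ℤ => ((j.natAbs : ℝ) + 1) * r ^ (j.natAbs - 1)) := by
  have hnat : Summable (fun n : ℕ => ((n : ℝ) + 1) * r ^ (n - 1)) := by
    rw [← summable_nat_add_iff 1]
    have h1 : Summable (fun n : ℕ => (n : ℝ) * r ^ n) := by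
      have := summable_pow_mul_geometric_of_norm_lt_one 1
        (by rwa [Real.norm_eq_abs, _root_.abs_of_nonneg hr0] : ‖r‖ < 1)
      simpa using this
    have h2 : Summable (fun n : ℕ => (n : ℝ) * r ^ n + 2 * r ^ n) :=
      h1.add ((summable_geometric_of_lt_one hr0 hr1).mul_left 2)
    refine h2.congr fun n => ?_
    push_cast [Nat.add_sub_cancel]
    ring
  apply Summable.of_nat_of_neg
  · refine hnat.congr fun n => ?_
    simp [Int.natAbs_natCast]
  · refine hnat.congr fun n => ?_
    simp [Int.natAbs_neg, Int.natAbs_natCast]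

variable (q) in
lemma norm_term_le (r : ℝ) (hr : r = ‖q‖) (hr0 : 0 ≤ r) (hr1 : r < 1) (j : ℤ) (w : ℂ)
    (hw : ‖w‖ ≤ 1) :
    ‖(-1 : ℂ) ^ j * ((j : ℂ) + w) * q ^ e j‖ ≤ ((j.natAbs : ℝ) + 1) * r ^ (j.natAbs - 1) := by
  rw [norm_mul, norm_mul, norm_zpow, norm_neg, norm_one, one_zpow, one_mul]
  have h1 : ‖(j : ℂ) + w‖ ≤ (j.natAbs : ℝ) + 1 := by
    calc ‖(j : ℂ) + w‖ ≤ ‖(j : ℂ)‖ + ‖w‖ := norm_add_le _ _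
      _ ≤ (j.natAbs : ℝ) + 1 := by
          rw [Complex.norm_intCast]
          rw [Nat.cast_natAbs, Int.cast_abs]
          linarith
  have h2 : ‖q ^ e j‖ ≤ r ^ (j.natAbs - 1) := by
    rw [norm_pow, ← hr]
    exact pow_le_pow_of_le_one hr0 hr1.le (e_lb j)
  calc ‖(j : ℂ) + w‖ * ‖q ^ e j‖ ≤ ((j.natAbs : ℝ) + 1) * r ^ (j.natAbs - 1) :=
    mul_le_mul h1 h2 (norm_nonneg _) (by positivity)

include hq1 in
lemma summable_cj : Summable (fun j : ℤ => (-1 : ℂ) ^ j * (j : ℂ) * q ^ e j) := by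
  apply Summable.of_norm_bounded (summable_weight ‖q‖ (norm_nonneg q) hq1)
  intro j
  have := norm_term_le q ‖q‖ rfl (norm_nonneg q) hq1 j 0 (by simp)
  simpa using this

include hq1 in
lemma summable_hj : Summable (fun j : ℤ => (-1 : ℂ) ^ j * (1 / 2 : ℂ) * q ^ e j) := by
  apply Summable.of_norm_bounded (summable_weight ‖q‖ (norm_nonneg q) hq1)
  intro j
  rw [norm_mul, norm_mul, norm_zpow, norm_neg, norm_one, one_zpow, one_mul]
  have h2 : ‖q ^ e j‖ ≤ ‖q‖ ^ (j.natAbs - 1) := by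
    rw [norm_pow]
    exact pow_le_pow_of_le_one (norm_nonneg q) hq1.le (e_lb j)
  have h1 : ‖(1 / 2 : ℂ)‖ ≤ (j.natAbs : ℝ) + 1 := by
    have hh : ‖(1 / 2 : ℂ)‖ = 1 / 2 := by
      rw [show (1 / 2 : ℂ) = ((1 / 2 : ℝ) : ℂ) by norm_num, Complex.norm_real]
      norm_num
    rw [hh]
    have : (0 : ℝ) ≤ (j.natAbs : ℝ) := Nat.cast_nonneg _
    linarith
  exact mul_le_mul h1 h2 (norm_nonneg _) (by positivity)


lemma neg_one_zpow_self_mul (j : ℤ) : (-1 : ℂ) ^ j * (-1 : ℂ) ^ j = 1 := by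
  rw [← zpow_add₀ (by norm_num : (-1 : ℂ) ≠ 0), show j + j = 2 * j by ring, zpow_mul]
  norm_num

lemma neg_one_zpow_neg_sub (j : ℤ) : (-1 : ℂ) ^ (-j - 1) = -(-1 : ℂ) ^ j := by
  have h1 : (-1 : ℂ) ≠ 0 := by norm_num
  have h2 := neg_one_zpow_self_mul j
  rw [show -j - 1 = -(j + 1) by ring, zpow_neg, zpow_add_one₀ h1, mul_neg_one, inv_neg,
    inv_eq_of_mul_eq_one_right h2]

include hq1 in
lemma tsum_half : ∑' j : ℤ, (-1 : ℂ) ^ j * (1 / 2 : ℂ) * q ^ e j = 0 := by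
  set h : ℤ → ℂ := fun j => (-1 : ℂ) ^ j * (1 / 2 : ℂ) * q ^ e j with hh
  let σ : ℤ ≃ ℤ := ⟨fun j => -j - 1, fun j => -j - 1, fun j => by show -(-j - 1) - 1 = j; omega, fun j => by show -(-j - 1) - 1 = j; omega⟩
  have h1 : ∑' j, h (σ j) = ∑' j, h j := σ.tsum_eq h
  have h2 : ∀ j, h (σ j) = -h j := by
    intro j
    show (-1 : ℂ) ^ (-j - 1) * (1 / 2 : ℂ) * q ^ e (-j - 1) = -((-1 : ℂ) ^ j * (1 / 2 : ℂ) * q ^ e j)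
    rw [e_neg, neg_one_zpow_neg_sub]
    ring
  rw [tsum_congr h2, tsum_neg] at h1
  have h3 : (2 : ℂ) * ∑' j, h j = 0 := by linear_combination -h1
  have h4 : (2 : ℂ) ≠ 0 := by norm_num
  exact (mul_eq_zero.mp h3).resolve_left h4

include hq1 in
theorem cube : (∏' n : ℕ, (1 - q ^ (n + 1))) ^ 3
    = ∑' j : ℤ, (-1 : ℂ) ^ j * ((j : ℂ) + 1 / 2) * q ^ e j := by
  classical
  obtain ⟨D, hD0, hD⟩ := lowerD hq1
  set U := Real.exp (∑' n : ℕ, ‖q‖ ^ (n + 1)) with hU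
  set P := ∏' n : ℕ, (1 - q ^ (n + 1)) with hP
  set f : ℕ → ℤ → ℂ := fun n j =>
    if j ∈ Finset.Icc (-(n : ℤ) - 1) ((n : ℤ) + 1) then
      (-1 : ℂ) ^ j * (j : ℂ) * q ^ e j * Bq q (2 * n + 2) ((n : ℤ) + 1 + j) else 0 with hf
  set g : ℤ → ℂ := fun j => (-1 : ℂ) ^ j * (j : ℂ) * q ^ e j * P⁻¹ with hg
  have hPne : P ≠ 0 := Pne hq1
  have hbound : ∀ n j, ‖f n j‖ ≤ ((j.natAbs : ℝ) + 1) * ‖q‖ ^ (j.natAbs - 1) * (U / (D * D)) := by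
    intro n j
    have hpos : (0 : ℝ) ≤ ((j.natAbs : ℝ) + 1) * ‖q‖ ^ (j.natAbs - 1) * (U / (D * D)) := by
      have : (0 : ℝ) < U := Real.exp_pos _
      positivity
    simp only [hf]
    split_ifs with hcase
    · rw [norm_mul]
      have h1 := norm_term_le q ‖q‖ rfl (norm_nonneg q) hq1 j 0 (by simp)
      simp only [add_zero] at h1
      have h2 := Bq_bound hq1 hD0 hD (2 * n + 2) ((n : ℤ) + 1 + j)
      have h3 : (0 : ℝ) < U := Real.exp_pos _
      exact mul_le_mul h1 h2 (norm_nonneg _) (by positivity)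
    · simpa using hpos
  have hbsum : Summable (fun j : ℤ =>
      ((j.natAbs : ℝ) + 1) * ‖q‖ ^ (j.natAbs - 1) * (U / (D * D))) :=
    (summable_weight ‖q‖ (norm_nonneg q) hq1).mul_right _
  have htend : ∀ j : ℤ, Filter.Tendsto (fun n => f n j) atTop (𝓝 (g j)) := by
    intro j
    have hBtend : Filter.Tendsto (fun n : ℕ => Bq q (2 * n + 2) ((n : ℤ) + 1 + j)) atTop
        (𝓝 P⁻¹) := by
      have t1 : Filter.Tendsto (fun n : ℕ => 2 * n + 2) atTop atTop :=
        tendsto_atTop_mono (fun n => by simp only [id_eq]; omega) tendsto_id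
      have t2 : Filter.Tendsto (fun n : ℕ => ((n : ℤ) + 1 + j).toNat) atTop atTop :=
        tendsto_atTop_mono (fun n => by omega) (tendsto_sub_atTop_nat j.natAbs)
      have t3 : Filter.Tendsto (fun n : ℕ => ((n : ℤ) + 1 - j).toNat) atTop atTop :=
        tendsto_atTop_mono (fun n => by omega) (tendsto_sub_atTop_nat j.natAbs)
      have hdiv : Filter.Tendsto (fun n : ℕ =>
          Pf q (2 * n + 2) / (Pf q ((n : ℤ) + 1 + j).toNat * Pf q ((n : ℤ) + 1 - j).toNat))
          atTop (𝓝 (P / (P * P))) :=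
        (((htendP hq1).comp t1).div (((htendP hq1).comp t2).mul ((htendP hq1).comp t3))
          (mul_ne_zero hPne hPne))
      have hPP : P / (P * P) = P⁻¹ := by field_simp
      rw [hPP] at hdiv
      refine hdiv.congr' ?_
      filter_upwards [Filter.eventually_ge_atTop j.natAbs] with n hn
      have hmem : (0 : ℤ) ≤ (n : ℤ) + 1 + j ∧ (n : ℤ) + 1 + j ≤ ((2 * n + 2 : ℕ) : ℤ) := by
        refine ⟨by omega, by push_cast; omega⟩
      rw [Bq, if_pos hmem]
      have harg : 2 * n + 2 - ((n : ℤ) + 1 + j).toNat = ((n : ℤ) + 1 - j).toNat := by omega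
      rw [harg]
    have hcm := hBtend.const_mul ((-1 : ℂ) ^ j * (j : ℂ) * q ^ e j)
    have heq : (fun n : ℕ => (-1 : ℂ) ^ j * (j : ℂ) * q ^ e j *
        Bq q (2 * n + 2) ((n : ℤ) + 1 + j)) =ᶠ[atTop] fun n => f n j := by
      filter_upwards [Filter.eventually_ge_atTop j.natAbs] with n hn
      simp only [hf]
      rw [if_pos (by simp only [Finset.mem_Icc]; omega)]
    exact hcm.congr' heq
  have hDC := tendsto_tsum_of_dominated_convergence hbsum htend
    (Filter.Eventually.of_forall hbound)
  have hseq : ∀ n : ℕ, ∑' j, f n j = Pf q (n + 1) * Pf q n := by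
    intro n
    rw [key (hqne hq1) n]
    rw [tsum_eq_sum (s := Finset.Icc (-(n : ℤ) - 1) ((n : ℤ) + 1))
      (fun b hb => by simp only [hf]; exact if_neg hb)]
    exact Finset.sum_congr rfl fun j hj => by simp only [hf]; exact if_pos hj
  have hlim1 : Filter.Tendsto (fun n : ℕ => Pf q (n + 1) * Pf q n) atTop (𝓝 (P * P)) :=
    ((htendP hq1).comp (tendsto_add_atTop_nat 1)).mul (htendP hq1)
  have hlim2 : Filter.Tendsto (fun n : ℕ => Pf q (n + 1) * Pf q n) atTop (𝓝 (∑' j, g j)) :=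
    hDC.congr fun n => hseq n
  have hPP2 : P * P = ∑' j, g j := tendsto_nhds_unique hlim1 hlim2
  have hgsum : ∑' j, g j = (∑' j : ℤ, (-1 : ℂ) ^ j * (j : ℂ) * q ^ e j) * P⁻¹ := tsum_mul_right
  have hS : (∑' j : ℤ, (-1 : ℂ) ^ j * (j : ℂ) * q ^ e j) = P ^ 3 := by
    rw [hgsum] at hPP2
    field_simp at hPP2
    rw [← hPP2]
  have h3 : ∑' j : ℤ, (-1 : ℂ) ^ j * ((j : ℂ) + 1 / 2) * q ^ e j
      = (∑' j : ℤ, (-1 : ℂ) ^ j * (j : ℂ) * q ^ e j)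
        + ∑' j : ℤ, (-1 : ℂ) ^ j * (1 / 2 : ℂ) * q ^ e j := by
    rw [← Summable.tsum_add (summable_cj hq1) (summable_hj hq1)]
    exact tsum_congr fun j => by ring
  rw [h3, hS, tsum_half hq1, add_zero]

end Analytic

end JacobiAux

open JacobiAux in
theorem jacobi_eta_cube (τ : ℂ) (hτ : 0 < τ.im) :
    Complex.exp (2 * Real.pi * Complex.I * τ / 8) *
      ∏' n : ℕ, (1 - Complex.exp (2 * Real.pi * Complex.I * τ * (n + 1))) ^ 3
    = ∑' n : ℤ, (-1 : ℂ) ^ n * ((n : ℂ) + 1 / 2) *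
        Complex.exp (2 * Real.pi * Complex.I * τ * ((1 / 2) * ((n : ℂ) + 1 / 2) ^ 2)) := by
  set w : ℂ := 2 * Real.pi * Complex.I * τ with hw
  set q : ℂ := Complex.exp w with hqdef
  have hwre : w.re = -(2 * Real.pi * τ.im) := by
    rw [hw]
    simp [Complex.mul_re, Complex.mul_im, Complex.I_re, Complex.I_im]
  have hq1 : ‖q‖ < 1 := by
    rw [hqdef, Complex.norm_exp, hwre]
    rw [Real.exp_lt_one_iff]
    nlinarith [Real.pi_pos]
  have hterm : ∀ n : ℕ, Complex.exp (w * ((n : ℂ) + 1)) = q ^ (n + 1) := by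
    intro n
    rw [hqdef, ← Complex.exp_nat_mul]
    congr 1
    push_cast
    ring
  have h := hasProdP hq1
  have h3 := (h.mul h).mul h
  have hfun : (fun n : ℕ => (1 - q ^ (n + 1)) * (1 - q ^ (n + 1)) * (1 - q ^ (n + 1)))
      = fun n : ℕ => (1 - q ^ (n + 1)) ^ 3 := funext fun n => by ring
  rw [hfun] at h3
  have hcube : ∏' n : ℕ, (1 - q ^ (n + 1)) ^ 3 = (∏' n : ℕ, (1 - q ^ (n + 1))) ^ 3 := by
    rw [h3.tprod_eq, (hasProdP hq1).tprod_eq]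
    ring
  have h1 : ∏' n : ℕ, (1 - Complex.exp (w * ((n : ℂ) + 1))) ^ 3
      = (∏' n : ℕ, (1 - q ^ (n + 1))) ^ 3 := by
    rw [← hcube]
    exact tprod_congr fun n => by rw [hterm n]
  rw [h1, cube hq1, ← tsum_mul_left]
  apply tsum_congr
  intro j
  have hqe : q ^ e j = Complex.exp ((e j : ℂ) * w) := by
    rw [hqdef, Complex.exp_nat_mul]
  have hee : (e j : ℂ) = ((j : ℂ) ^ 2 + (j : ℂ)) / 2 := by
    have hd := e_dvd j
    have h4 : 0 ≤ j * (j + 1) := by nlinarith [sq_nonneg (2 * j + 1)]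
    have h2 : (2 * (e j : ℤ)) = j * (j + 1) := by
      unfold e
      omega
    have h5 := congrArg (Int.cast : ℤ → ℂ) h2
    push_cast at h5
    linear_combination h5 / 2
  have hexp : w / 8 + (e j : ℂ) * w = w * ((1 / 2) * ((j : ℂ) + 1 / 2) ^ 2) := by
    linear_combination w * hee
  calc Complex.exp (w / 8) * ((-1 : ℂ) ^ j * ((j : ℂ) + 1 / 2) * q ^ e j)
      = (-1 : ℂ) ^ j * ((j : ℂ) + 1 / 2) * Complex.exp (w / 8 + (e j : ℂ) * w) := by
        rw [Complex.exp_add, hqe]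
        ring
    _ = (-1 : ℂ) ^ j * ((j : ℂ) + 1 / 2) * Complex.exp (w * ((1 / 2) * ((j : ℂ) + 1 / 2) ^ 2)) := by
        rw [hexp]
end
end

section
/- For |q| < 1 and complex a with |a| < 1, Euler's identity holds: 1/Π_{j≥0}(1 - a q^j) = Σ_{n≥0} aⁿ / ((1-q)(1-q²)···(1-qⁿ)). -/
open Filter Topology
set_option maxHeartbeats 1000000

noncomputable def eulC (q : ℂ) (n : ℕ) : ℂ := ∏ j ∈ Finset.range n, (1 - q ^ (j + 1))

noncomputable def eulS (q x : ℂ) : ℂ := ∑' n : ℕ, x ^ n / eulC q n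

section aux

variable {q : ℂ} (hq : ‖q‖ < 1)
include hq

lemma eul_factor_ne_zero (j : ℕ) : (1 : ℂ) - q ^ (j + 1) ≠ 0 := by
  have h : ‖q ^ (j + 1)‖ < 1 := by
    rw [norm_pow]
    have h1 : ‖q‖ ^ (j + 1) ≤ ‖q‖ ^ 1 :=
      pow_le_pow_of_le_one (norm_nonneg q) hq.le (by omega)
    exact lt_of_le_of_lt h1 (by simpa using hq)
  intro h0
  have : q ^ (j + 1) = 1 := by linear_combination -h0
  rw [this] at h
  simp at h

lemma eulC_ne_zero (n : ℕ) : eulC q n ≠ 0 :=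
  Finset.prod_ne_zero_iff.2 fun j _ => eul_factor_ne_zero hq j

lemma eul_factor_norm_pos (j : ℕ) : 0 < ‖(1 : ℂ) - q ^ (j + 1)‖ :=
  norm_pos_iff.2 (eul_factor_ne_zero hq j)

lemma eul_factor_tendsto : Tendsto (fun n : ℕ => ‖(1 : ℂ) - q ^ (n + 1)‖) atTop (𝓝 1) := by
  have h0 : Tendsto (fun n : ℕ => q ^ (n + 1)) atTop (𝓝 0) :=
    (tendsto_pow_atTop_nhds_zero_of_norm_lt_one hq).comp (tendsto_add_atTop_nat 1)
  have h1 : Tendsto (fun n : ℕ => (1 : ℂ) - q ^ (n + 1)) atTop (𝓝 1) := by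
    simpa using tendsto_const_nhds.sub h0
  simpa using h1.norm

lemma eul_summable {x : ℂ} (hx : ‖x‖ < 1) : Summable (fun n : ℕ => x ^ n / eulC q n) := by
  set r : ℝ := (1 + ‖x‖) / 2 with hr
  have hr1 : r < 1 := by rw [hr]; linarith
  have hrx : ‖x‖ < r := by rw [hr]; linarith
  have hrpos : 0 < r := lt_of_le_of_lt (norm_nonneg x) hrx
  apply summable_of_ratio_norm_eventually_le hr1
  have hev : ∀ᶠ n : ℕ in atTop, ‖x‖ ≤ r * ‖(1 : ℂ) - q ^ (n + 1)‖ := by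
    have ht : Tendsto (fun n : ℕ => r * ‖(1 : ℂ) - q ^ (n + 1)‖) atTop (𝓝 r) := by
      simpa using (eul_factor_tendsto hq).const_mul r
    exact ht.eventually (eventually_gt_nhds hrx) |>.mono fun n hn => hn.le
  filter_upwards [hev] with n hn
  have hu : 0 < ‖(1 : ℂ) - q ^ (n + 1)‖ := eul_factor_norm_pos hq n
  have hc : (0 : ℝ) < ‖eulC q n‖ := norm_pos_iff.2 (eulC_ne_zero hq n)
  have hcs : eulC q (n + 1) = eulC q n * (1 - q ^ (n + 1)) := Finset.prod_range_succ _ _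
  rw [norm_div, norm_div, norm_pow, norm_pow, hcs, norm_mul]
  have key : ‖x‖ ^ (n + 1) / (‖eulC q n‖ * ‖(1 : ℂ) - q ^ (n + 1)‖)
      = (‖x‖ / ‖(1 : ℂ) - q ^ (n + 1)‖) * (‖x‖ ^ n / ‖eulC q n‖) := by
    field_simp
    ring
  rw [key]
  have h1 : ‖x‖ / ‖(1 : ℂ) - q ^ (n + 1)‖ ≤ r := (div_le_iff₀ hu).2 hn
  exact mul_le_mul_of_nonneg_right h1 (by positivity)

lemma eul_funcEq {x : ℂ} (hx : ‖x‖ < 1) : eulS q (x * q) = (1 - x) * eulS q x := by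
  have hxq : ‖x * q‖ < 1 := by
    rw [norm_mul]
    calc ‖x‖ * ‖q‖ ≤ ‖x‖ * 1 := by
          exact mul_le_mul_of_nonneg_left hq.le (norm_nonneg x)
    _ = ‖x‖ := mul_one _
    _ < 1 := hx
  have h1 : Summable (fun n : ℕ => x ^ n / eulC q n) := eul_summable hq hx
  have h2 : Summable (fun n : ℕ => (x * q) ^ n / eulC q n) := eul_summable hq hxq
  have key : ∀ n : ℕ, x ^ (n + 1) / eulC q (n + 1) - (x * q) ^ (n + 1) / eulC q (n + 1)
      = x * (x ^ n / eulC q n) := by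
    intro n
    have hcs : eulC q (n + 1) = eulC q n * (1 - q ^ (n + 1)) := Finset.prod_range_succ _ _
    rw [hcs, div_sub_div_same,
      show x ^ (n + 1) - (x * q) ^ (n + 1) = x ^ (n + 1) * (1 - q ^ (n + 1)) by ring,
      mul_div_mul_right _ _ (eul_factor_ne_zero hq n), pow_succ,
      mul_comm (x ^ n) x, mul_div_assoc]
  have hsub : eulS q x - eulS q (x * q)
      = ∑' n : ℕ, (x ^ n / eulC q n - (x * q) ^ n / eulC q n) := (Summable.tsum_sub h1 h2).symm
  have hshift : (∑' n : ℕ, (x ^ n / eulC q n - (x * q) ^ n / eulC q n))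
      = x * eulS q x := by
    rw [Summable.tsum_eq_zero_add (h1.sub h2)]
    simp only [pow_zero]
    rw [tsum_congr key, tsum_mul_left]
    simp [eulS]
  have : eulS q x - eulS q (x * q) = x * eulS q x := hsub.trans hshift
  linear_combination -this

lemma eul_iter {a : ℂ} (ha : ‖a‖ < 1) (N : ℕ) :
    eulS q a * ∏ j ∈ Finset.range N, (1 - a * q ^ j) = eulS q (a * q ^ N) := by
  induction N with
  | zero => simp
  | succ N ih =>
    have hx : ‖a * q ^ N‖ < 1 := by
      rw [norm_mul, norm_pow]
      calc ‖a‖ * ‖q‖ ^ N ≤ ‖a‖ * 1 :=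
        mul_le_mul_of_nonneg_left (pow_le_one₀ (norm_nonneg q) hq.le) (norm_nonneg a)
      _ < 1 := by simpa using ha
    rw [Finset.prod_range_succ, ← mul_assoc, ih]
    have := eul_funcEq hq hx
    rw [show a * q ^ N * q = a * q ^ (N + 1) by ring] at this
    rw [this]
    ring

lemma eulC_shift_summable : Summable (fun n : ℕ => (2⁻¹ : ℝ) ^ n / ‖eulC q (n + 1)‖) := by
  have hbase : Summable (fun n : ℕ => ((2⁻¹ : ℂ)) ^ n / eulC q n) := by
    apply eul_summable hq
    rw [show ((2⁻¹ : ℂ)) = ((2⁻¹ : ℝ) : ℂ) by norm_num]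
    rw [Complex.norm_real]
    norm_num
  have hnorm : Summable (fun n : ℕ => (2⁻¹ : ℝ) ^ n / ‖eulC q n‖) := by
    have := hbase.norm
    simpa [norm_div, norm_pow, Complex.norm_ofNat] using this
  have hshift : Summable (fun n : ℕ => (2⁻¹ : ℝ) ^ (n + 1) / ‖eulC q (n + 1)‖) :=
    (summable_nat_add_iff 1).2 hnorm
  have : Summable (fun n : ℕ => 2 * ((2⁻¹ : ℝ) ^ (n + 1) / ‖eulC q (n + 1)‖)) :=
    hshift.mul_left 2
  apply this.congr
  intro n
  rw [pow_succ]
  ring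

lemma eul_tail_bound {x : ℂ} (hx : ‖x‖ ≤ 2⁻¹) :
    ‖eulS q x - 1‖ ≤ ‖x‖ * ∑' n : ℕ, (2⁻¹ : ℝ) ^ n / ‖eulC q (n + 1)‖ := by
  have hx1 : ‖x‖ < 1 := lt_of_le_of_lt hx (by norm_num)
  have hsum : Summable (fun n : ℕ => x ^ n / eulC q n) := eul_summable hq hx1
  have h0 : eulS q x = 1 + ∑' n : ℕ, x ^ (n + 1) / eulC q (n + 1) := by
    rw [eulS, Summable.tsum_eq_zero_add hsum]
    simp [eulC]
  rw [h0]
  have htail : Summable (fun n : ℕ => x ^ (n + 1) / eulC q (n + 1)) :=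
    (summable_nat_add_iff 1).2 hsum
  have hbound : ∀ n : ℕ, ‖x ^ (n + 1) / eulC q (n + 1)‖
      ≤ ‖x‖ * ((2⁻¹ : ℝ) ^ n / ‖eulC q (n + 1)‖) := by
    intro n
    rw [norm_div, norm_pow, pow_succ', mul_div_assoc]
    gcongr
  calc ‖1 + (∑' n : ℕ, x ^ (n + 1) / eulC q (n + 1)) - 1‖
      = ‖∑' n : ℕ, x ^ (n + 1) / eulC q (n + 1)‖ := by rw [add_sub_cancel_left]
    _ ≤ ∑' n : ℕ, ‖x ^ (n + 1) / eulC q (n + 1)‖ := norm_tsum_le_tsum_norm htail.norm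
    _ ≤ ∑' n : ℕ, ‖x‖ * ((2⁻¹ : ℝ) ^ n / ‖eulC q (n + 1)‖) := by
        apply Summable.tsum_le_tsum hbound htail.norm
        exact (eulC_shift_summable hq).mul_left ‖x‖
    _ = ‖x‖ * ∑' n : ℕ, (2⁻¹ : ℝ) ^ n / ‖eulC q (n + 1)‖ := tsum_mul_left

lemma eul_tail_tendsto {a : ℂ} (ha : ‖a‖ < 1) :
    Tendsto (fun N : ℕ => eulS q (a * q ^ N)) atTop (𝓝 1) := by
  set K : ℝ := ∑' n : ℕ, (2⁻¹ : ℝ) ^ n / ‖eulC q (n + 1)‖ with hK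
  have hnorm0 : Tendsto (fun N : ℕ => ‖a * q ^ N‖) atTop (𝓝 0) := by
    have : Tendsto (fun N : ℕ => a * q ^ N) atTop (𝓝 0) := by
      simpa using (tendsto_pow_atTop_nhds_zero_of_norm_lt_one hq).const_mul a
    simpa using this.norm
  have hev : ∀ᶠ N : ℕ in atTop, ‖a * q ^ N‖ ≤ 2⁻¹ :=
    hnorm0.eventually (eventually_le_nhds (by norm_num))
  rw [tendsto_iff_norm_sub_tendsto_zero]
  apply squeeze_zero' (Eventually.of_forall fun N => norm_nonneg _)
    (g := fun N => ‖a * q ^ N‖ * K)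
  · filter_upwards [hev] with N hN
    exact eul_tail_bound hq hN
  · simpa using hnorm0.mul_const K

lemma eul_multipliable {a : ℂ} (ha : ‖a‖ < 1) :
    Multipliable (fun j : ℕ => 1 - a * q ^ j) := by
  have hne : ∀ j : ℕ, (1 : ℂ) - a * q ^ j ≠ 0 := by
    intro j h0
    have h : ‖a * q ^ j‖ < 1 := by
      rw [norm_mul, norm_pow]
      calc ‖a‖ * ‖q‖ ^ j ≤ ‖a‖ * 1 :=
        mul_le_mul_of_nonneg_left (pow_le_one₀ (norm_nonneg q) hq.le) (norm_nonneg a)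
      _ < 1 := by simpa using ha
    have : a * q ^ j = 1 := by linear_combination -h0
    rw [this] at h
    simp at h
  have hlog : Summable fun j : ℕ => Complex.log (1 - a * q ^ j) := by
    have hgeo : Summable (fun j : ℕ => (3 / 2 : ℝ) * (‖a‖ * ‖q‖ ^ j)) :=
      ((summable_geometric_of_lt_one (norm_nonneg q) hq).mul_left ‖a‖).mul_left (3 / 2)
    apply Summable.of_norm_bounded_eventually_nat hgeo
    have hev : ∀ᶠ j : ℕ in atTop, ‖a * q ^ j‖ ≤ 1 / 2 := by
      have : Tendsto (fun j : ℕ => a * q ^ j) atTop (𝓝 0) := by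
        simpa using (tendsto_pow_atTop_nhds_zero_of_norm_lt_one hq).const_mul a
      exact (by simpa using this.norm : Tendsto (fun j : ℕ => ‖a * q ^ j‖) atTop (𝓝 0))
        |>.eventually (eventually_le_nhds (by norm_num))
    filter_upwards [hev] with j hj
    have h1 : ‖-(a * q ^ j)‖ ≤ 1 / 2 := by simpa using hj
    have := Complex.norm_log_one_add_half_le_self h1
    rw [show (1 : ℂ) + -(a * q ^ j) = 1 - a * q ^ j by ring] at this
    calc ‖Complex.log (1 - a * q ^ j)‖ ≤ 3 / 2 * ‖-(a * q ^ j)‖ := this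
      _ = 3 / 2 * (‖a‖ * ‖q‖ ^ j) := by rw [norm_neg, norm_mul, norm_pow]
  exact Complex.multipliable_of_summable_log hlog

end aux

theorem euler_identity (q a : ℂ) (hq : ‖q‖ < 1) (ha : ‖a‖ < 1) :
    (∏' j : ℕ, (1 - a * q ^ j))⁻¹
      = ∑' n : ℕ, a ^ n / ∏ j ∈ Finset.range n, (1 - q ^ (j + 1)) := by
  have hmul := eul_multipliable hq ha
  have hP : Tendsto (fun N : ℕ => ∏ j ∈ Finset.range N, (1 - a * q ^ j)) atTop
      (𝓝 (∏' j : ℕ, (1 - a * q ^ j))) := hmul.hasProd.tendsto_prod_nat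
  have h1 : Tendsto (fun N : ℕ => eulS q a * ∏ j ∈ Finset.range N, (1 - a * q ^ j)) atTop
      (𝓝 (eulS q a * ∏' j : ℕ, (1 - a * q ^ j))) := hP.const_mul _
  have h2 : Tendsto (fun N : ℕ => eulS q a * ∏ j ∈ Finset.range N, (1 - a * q ^ j)) atTop
      (𝓝 1) := by
    have := eul_tail_tendsto hq ha
    apply this.congr
    intro N
    exact (eul_iter hq ha N).symm
  have hone : eulS q a * ∏' j : ℕ, (1 - a * q ^ j) = 1 := tendsto_nhds_unique h1 h2
  have : eulS q a = (∏' j : ℕ, (1 - a * q ^ j))⁻¹ := eq_inv_of_mul_eq_one_left hone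
  rw [← this]
  rfl
end

section
/- Define D(0,0) as the constant term in ζ₁, ζ₂ of i η(τ)⁹ / (ϑ(z₁;τ)ϑ(z₂;τ)ϑ(z₁+z₂;τ)) in the region |q| < |ζ₁|, |ζ₂|, |ζ₁ζ₂| < 1. Then D(0,0) = Σ_{n≥1} n q^{n²}, assuming the decomposition D(r₁,r₂) = D₁(r₁,r₂) + D₂(r₁,r₂) with D₁(𝐫) = Σ_{n₁,n₂ ≥ 0} (n₁+2n₂-r₁) q^{n₁²+n₁n₂+n₂²-r₂n₁-r₁n₂} and D₂(𝐫) = Σ_{n₁,n₂ ≥ 0} (n₁-2n₂+r₁-r₂) q^{n₁²-n₁n₂+n₂²-r₂n₁+(r₂-r₁)n₂}. Concretely: Σ_{n₁,n₂≥0} (n₁+2n₂) q^{n₁²+n₁n₂+n₂²} + Σ_{n₁,n₂≥0} (n₁-2n₂) q^{n₁²-n₁n₂+n₂²} = Σ_{n≥1} n q^{n²}. -/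
/-!
Split the second series along the diagonal. Where `n₁ ≥ n₂`, put `n₁ = m + n₂`: the summand
becomes `(m - n₂) q^(m² + m n₂ + n₂²)`, antisymmetric under `m ↔ n₂` with a symmetric exponent,
so this part sums to zero. Where `n₁ < n₂`, put `n₂ = n₁ + m + 1`: the summand becomes minus the
summand of the first series at `(n₁, m + 1)`. Hence everything cancels except the `n₂ = 0` slice
of the first series, which is `∑ n q^(n²)`.
-/

open Function Set

section Reindex

variable {α β γ δ : Type*} [AddCommMonoid α] [TopologicalSpace α] [ContinuousAdd α]

theorem HasSum.add_of_isCompl_range {f : β → α} {g : γ → β} {h : δ → β} {a b : α}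
    (hg : Injective g) (hh : Injective h) (hgh : IsCompl (range g) (range h))
    (ha : HasSum (f ∘ g) a) (hb : HasSum (f ∘ h) b) : HasSum f (a + b) :=
  (hg.hasSum_range_iff.mpr ha).add_isCompl hgh (hh.hasSum_range_iff.mpr hb)

theorem HasSum.add_of_snd_le_fst_of_fst_lt_snd {f : ℕ × ℕ → α} {a b : α}
    (ha : HasSum (fun p : ℕ × ℕ ↦ f (p.1 + p.2, p.2)) a)
    (hb : HasSum (fun p : ℕ × ℕ ↦ f (p.1, p.1 + p.2 + 1)) b) : HasSum f (a + b) := by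
  refine HasSum.add_of_isCompl_range (g := fun p : ℕ × ℕ ↦ (p.1 + p.2, p.2))
    (h := fun p : ℕ × ℕ ↦ (p.1, p.1 + p.2 + 1)) ?_ ?_ ?_ ha hb
  · rintro ⟨a, b⟩ ⟨c, d⟩ h
    simp only [Prod.mk.injEq] at h ⊢
    omega
  · rintro ⟨a, b⟩ ⟨c, d⟩ h
    simp only [Prod.mk.injEq] at h ⊢
    omega
  · constructor
    · rw [disjoint_iff_inf_le]
      rintro _ ⟨⟨⟨a, b⟩, rfl⟩, ⟨⟨c, d⟩, h⟩⟩
      simp only [Prod.mk.injEq] at h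
      omega
    · rw [codisjoint_iff_le_sup]
      rintro ⟨a, b⟩ -
      rcases le_or_gt b a with hba | hab
      · exact Or.inl ⟨(a - b, b), Prod.ext (Nat.sub_add_cancel hba) rfl⟩
      · exact Or.inr ⟨(a, b - a - 1), Prod.ext rfl (by dsimp only; omega)⟩

theorem HasSum.add_of_snd_zero_of_snd_succ {f : ℕ × ℕ → α} {a b : α}
    (ha : HasSum (fun n : ℕ ↦ f (n, 0)) a)
    (hb : HasSum (fun p : ℕ × ℕ ↦ f (p.1, p.2 + 1)) b) : HasSum f (a + b) := by
  refine HasSum.add_of_isCompl_range (g := fun n : ℕ ↦ (n, 0))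
    (h := fun p : ℕ × ℕ ↦ (p.1, p.2 + 1)) ?_ ?_ ?_ ha hb
  · intro m n h
    simpa using h
  · rintro ⟨a, b⟩ ⟨c, d⟩ h
    simp only [Prod.mk.injEq] at h ⊢
    omega
  · constructor
    · rw [disjoint_iff_inf_le]
      rintro _ ⟨⟨n, rfl⟩, ⟨⟨c, d⟩, h⟩⟩
      simp only [Prod.mk.injEq] at h
      omega
    · rw [codisjoint_iff_le_sup]
      rintro ⟨a, b⟩ -
      rcases b with _ | b
      · exact Or.inl ⟨a, rfl⟩
      · exact Or.inr ⟨(a, b), rfl⟩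

end Reindex

theorem HasSum.eq_zero_of_swap_eq_neg {α β : Type*} [AddCommGroup α] [TopologicalSpace α]
    [IsTopologicalAddGroup α] [T2Space α] [IsAddTorsionFree α] {f : β × β → α} {s : α}
    (hf : HasSum f s) (hswap : ∀ p, f p.swap = -f p) : s = 0 := by
  have hneg : HasSum (fun p ↦ -f p) s := by
    simpa only [comp_def, Equiv.coe_prodComm, hswap] using (Equiv.prodComm β β).hasSum_iff.mpr hf
  have hs : s = -s := hneg.unique hf.neg
  rw [← two_nsmul_eq_zero, two_nsmul]
  nth_rewrite 2 [hs]
  exact add_neg_cancel s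

theorem summable_add_one_mul_geometric {r : ℝ} (h₀ : 0 ≤ r) (h₁ : r < 1) :
    Summable fun n : ℕ ↦ ((n : ℝ) + 1) * r ^ n := by
  have := (summable_pow_mul_geometric_of_norm_lt_one 1 (by rwa [Real.norm_of_nonneg h₀])).add
    (summable_geometric_of_lt_one h₀ h₁)
  simpa [add_mul] using this

theorem summable_mul_zpow_of_norm_le_of_le {𝕜 : Type*} [NormedDivisionRing 𝕜] [CompleteSpace 𝕜]
    {q : 𝕜} (hq : ‖q‖ < 1) {c : ℕ × ℕ → 𝕜} {e : ℕ × ℕ → ℤ} (C : ℝ)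
    (hc : ∀ p, ‖c p‖ ≤ C * (((p.1 : ℝ) + 1) * ((p.2 : ℝ) + 1)))
    (he : ∀ p : ℕ × ℕ, (p.1 + p.2 : ℤ) ≤ e p) :
    Summable fun p ↦ c p * q ^ e p := by
  have hr := summable_add_one_mul_geometric (norm_nonneg q) hq
  refine Summable.of_norm_bounded ((hr.mul_of_nonneg hr (fun n ↦ by positivity)
    (fun n ↦ by positivity)).mul_left C) fun p ↦ ?_
  have hpow : ‖q ^ e p‖ ≤ ‖q‖ ^ p.1 * ‖q‖ ^ p.2 := by
    obtain ⟨n, hn⟩ := Int.eq_ofNat_of_zero_le (by have := he p; omega : 0 ≤ e p)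
    rw [hn, zpow_natCast, norm_pow, ← pow_add]
    exact pow_le_pow_of_le_one (norm_nonneg q) hq.le (by have := he p; omega)
  calc ‖c p * q ^ e p‖
      ≤ C * (((p.1 : ℝ) + 1) * ((p.2 : ℝ) + 1)) * (‖q‖ ^ p.1 * ‖q‖ ^ p.2) := by
        rw [norm_mul]
        exact mul_le_mul (hc p) hpow (norm_nonneg _) ((norm_nonneg _).trans (hc p))
    _ = C * ((((p.1 : ℝ) + 1) * ‖q‖ ^ p.1) * (((p.2 : ℝ) + 1) * ‖q‖ ^ p.2)) := by ring

theorem add_le_sq_add_mul_add_sq (a b : ℕ) : a + b ≤ a ^ 2 + a * b + b ^ 2 := by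
  nlinarith [Nat.le_self_pow two_ne_zero a, Nat.le_self_pow two_ne_zero b, Nat.zero_le (a * b)]

noncomputable def d₁Term (q : ℂ) (n : ℕ × ℕ) : ℂ :=
  ((n.1 : ℂ) + 2 * n.2) * q ^ ((n.1 : ℤ) ^ 2 + (n.1 : ℤ) * n.2 + (n.2 : ℤ) ^ 2)

noncomputable def d₂Term (q : ℂ) (n : ℕ × ℕ) : ℂ :=
  ((n.1 : ℂ) - 2 * n.2) * q ^ ((n.1 : ℤ) ^ 2 - (n.1 : ℤ) * n.2 + (n.2 : ℤ) ^ 2)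

variable {q : ℂ}

theorem summable_d₁Term (hq : ‖q‖ < 1) : Summable (d₁Term q) := by
  refine summable_mul_zpow_of_norm_le_of_le hq 2 (fun p ↦ ?_) fun p ↦ ?_
  · refine (norm_add_le _ _).trans ?_
    simp only [Complex.norm_natCast, norm_mul, Complex.norm_ofNat]
    nlinarith [(p.1.cast_nonneg : (0 : ℝ) ≤ p.1), (p.2.cast_nonneg : (0 : ℝ) ≤ p.2)]
  · exact_mod_cast add_le_sq_add_mul_add_sq p.1 p.2

theorem summable_d₁Term_comp_succ (hq : ‖q‖ < 1) :
    Summable fun n : ℕ × ℕ ↦ d₁Term q (n.1, n.2 + 1) :=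
  (summable_d₁Term hq).comp_injective fun m n h ↦ by simpa [Prod.ext_iff] using h

theorem hasSum_sub_mul_zpow_eq_zero (hq : ‖q‖ < 1) :
    HasSum (fun n : ℕ × ℕ ↦
      ((n.1 : ℂ) - n.2) * q ^ ((n.1 : ℤ) ^ 2 + (n.1 : ℤ) * n.2 + (n.2 : ℤ) ^ 2)) 0 := by
  have hs : Summable fun n : ℕ × ℕ ↦
      ((n.1 : ℂ) - n.2) * q ^ ((n.1 : ℤ) ^ 2 + (n.1 : ℤ) * n.2 + (n.2 : ℤ) ^ 2) := by
    refine summable_mul_zpow_of_norm_le_of_le hq 1 (fun p ↦ ?_) fun p ↦ ?_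
    · refine (norm_sub_le _ _).trans ?_
      simp only [Complex.norm_natCast]
      nlinarith [(p.1.cast_nonneg : (0 : ℝ) ≤ p.1), (p.2.cast_nonneg : (0 : ℝ) ≤ p.2)]
    · exact_mod_cast add_le_sq_add_mul_add_sq p.1 p.2
  have h := hs.hasSum
  rwa [h.eq_zero_of_swap_eq_neg fun p ↦ by simp only [Prod.fst_swap, Prod.snd_swap]; ring_nf] at h

theorem hasSum_d₁Term (hq : ‖q‖ < 1) :
    HasSum (d₁Term q)
      ((∑' n : ℕ, (n : ℂ) * q ^ ((n : ℤ) ^ 2)) + ∑' n : ℕ × ℕ, d₁Term q (n.1, n.2 + 1)) := by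
  have hslice : Summable fun n : ℕ ↦ d₁Term q (n, 0) :=
    (summable_d₁Term hq).comp_injective fun m n h ↦ by simpa using h
  refine .add_of_snd_zero_of_snd_succ ?_ (summable_d₁Term_comp_succ hq).hasSum
  convert hslice.hasSum using 1
  simp [d₁Term]

theorem hasSum_d₂Term (hq : ‖q‖ < 1) :
    HasSum (d₂Term q) (-∑' n : ℕ × ℕ, d₁Term q (n.1, n.2 + 1)) := by
  rw [← zero_add (-_)]
  refine .add_of_snd_le_fst_of_fst_lt_snd
    ((hasSum_sub_mul_zpow_eq_zero hq).congr_fun fun p ↦ ?_)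
    ((summable_d₁Term_comp_succ hq).hasSum.neg.congr_fun fun p ↦ ?_)
  · simp only [d₂Term]
    push_cast
    ring_nf
  · simp only [d₂Term, d₁Term]
    push_cast
    ring_nf

theorem D00_identity_general (q : ℂ) (hq1 : ‖q‖ < 1) :
    (∑' n : ℕ × ℕ, ((n.1 : ℂ) + 2 * n.2) *
        q ^ ((n.1 : ℤ) ^ 2 + (n.1 : ℤ) * n.2 + (n.2 : ℤ) ^ 2))
      + (∑' n : ℕ × ℕ, ((n.1 : ℂ) - 2 * n.2) *
          q ^ ((n.1 : ℤ) ^ 2 - (n.1 : ℤ) * n.2 + (n.2 : ℤ) ^ 2))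
    = ∑' n : ℕ, (n : ℂ) * q ^ ((n : ℤ) ^ 2) := by
  change ∑' n, d₁Term q n + ∑' n, d₂Term q n = _
  rw [(hasSum_d₁Term hq1).tsum_eq, (hasSum_d₂Term hq1).tsum_eq]
  ring

theorem D00_identity (q : ℂ) (hq0 : 0 < ‖q‖) (hq1 : ‖q‖ < 1) :
    (∑' n : ℕ × ℕ, ((n.1 : ℂ) + 2 * n.2) *
        q ^ ((n.1 : ℤ) ^ 2 + (n.1 : ℤ) * n.2 + (n.2 : ℤ) ^ 2))
      + (∑' n : ℕ × ℕ, ((n.1 : ℂ) - 2 * n.2) *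
          q ^ ((n.1 : ℤ) ^ 2 - (n.1 : ℤ) * n.2 + (n.2 : ℤ) ^ 2))
    = ∑' n : ℕ, (n : ℂ) * q ^ ((n : ℤ) ^ 2) :=
  D00_identity_general q hq1
end
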